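/- arXiv:1207.2565 — 5 statements merged into one kernel-verified Lean document; each statement's English description precedes it below -/
import Mathlib

section
/- With the kernel K(x,y)=ψ(y−Ax)+ψ(x−Ay), the first eigenvalues satisfy lim_{p→∞} [λ_{1,p}(ℝ^d)]^{1/p} = 0. -/
open MeasureTheory Filter

/-- The first eigenvalue of the nonlocal `p`-Laplacian with kernel `K` on the whole space. -/
noncomputable def lambdaOne (d : ℕ) (p : ℝ)
    (K : EuclideanSpace ℝ (Fin d) → EuclideanSpace ℝ (Fin d) → ℝ) : ℝ :=
  sInf { r : ℝ |
    ∃ u : EuclideanSpace ℝ (Fin d) → ℝ,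
      MemLp u (ENNReal.ofReal p) volume ∧
      ¬ u =ᵐ[volume] (0 : EuclideanSpace ℝ (Fin d) → ℝ) ∧
      r = (∫ x, ∫ y, K x y * |u x - u y| ^ p) / (∫ x, |u x| ^ p) }

/-!
The Rayleigh quotient is tested on `u(x) = (1 + ‖x‖) ^ (-(d + 1) / p)`, whose `p`-th power is
integrable. Where the kernel is nonzero, `y` lies within distance one of `A x`, or `x` within
distance one of `A y`, so `log (1 + ‖x‖)` and `log (1 + ‖y‖)` differ by at most a constant `L`.
Hence `|u x - u y| ≤ c_p u x` with `c_p = (d + 1) L / p * exp ((d + 1) L / p) = O(1 / p)`, and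
since `∫ K(x, y) dy ≤ V` uniformly in `x`, we get `λ_{1,p} ≤ V c_p ^ p`, whose `p`-th root tends
to zero.
-/

open Real Metric Set Topology Module

lemma abs_exp_sub_exp_le (s t : ℝ) : |exp t - exp s| ≤ |t - s| * exp (s + |t - s|) := by
  have tangent (a b : ℝ) : exp a - exp b ≤ (a - b) * exp a := by
    have := mul_le_mul_of_nonneg_right (add_one_le_exp (b - a)) (exp_pos a).le
    rw [← exp_add, sub_add_cancel] at this
    linarith
  have hs : exp s ≤ exp (s + |t - s|) := exp_le_exp.2 (le_add_of_nonneg_right (abs_nonneg _))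
  have ht : exp t ≤ exp (s + |t - s|) := exp_le_exp.2 (by linarith [le_abs_self (t - s)])
  rw [abs_sub_le_iff]
  constructor
  · nlinarith [tangent t s, le_abs_self (t - s), abs_nonneg (t - s), exp_pos t]
  · nlinarith [tangent s t, neg_abs_le (t - s), abs_nonneg (t - s), exp_pos s]

section DecayProfile

variable {E : Type*} [NormedAddCommGroup E]

noncomputable def decayProfile (β : ℝ) (x : E) : ℝ := (1 + ‖x‖) ^ (-β)

lemma decayProfile_pos (β : ℝ) (x : E) : 0 < decayProfile β x :=
  rpow_pos_of_pos (by positivity) _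

lemma decayProfile_eq_exp (β : ℝ) (x : E) :
    decayProfile β x = exp (-(β * log (1 + ‖x‖))) := by
  rw [decayProfile, rpow_def_of_pos (by positivity), mul_neg, mul_comm]

lemma decayProfile_rpow (β p : ℝ) (x : E) :
    decayProfile β x ^ p = decayProfile (β * p) x := by
  rw [decayProfile, decayProfile, ← rpow_mul (by positivity), neg_mul]

lemma abs_decayProfile_sub_le {β L : ℝ} (hβ : 0 ≤ β) {x y : E}
    (hxy : |log (1 + ‖x‖) - log (1 + ‖y‖)| ≤ L) :
    |decayProfile β x - decayProfile β y| ≤ β * L * exp (β * L) * decayProfile β x := by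
  have hgap : |-(β * log (1 + ‖y‖)) - -(β * log (1 + ‖x‖))| ≤ β * L := by
    rw [show -(β * log (1 + ‖y‖)) - -(β * log (1 + ‖x‖))
        = β * (log (1 + ‖x‖) - log (1 + ‖y‖)) by ring, abs_mul, abs_of_nonneg hβ]
    exact mul_le_mul_of_nonneg_left hxy hβ
  rw [abs_sub_comm, decayProfile_eq_exp, decayProfile_eq_exp]
  refine (abs_exp_sub_exp_le _ _).trans ?_
  have hL : 0 ≤ L := (abs_nonneg _).trans hxy
  rw [exp_add, ← mul_assoc, mul_right_comm _ _ (exp _)]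
  gcongr

lemma decayProfile_not_ae_eq_zero [MeasurableSpace E] (μ : Measure E) [NeZero μ] (β : ℝ) :
    ¬ decayProfile β =ᵐ[μ] (0 : E → ℝ) := fun h =>
  let ⟨x, hx⟩ := h.exists
  (decayProfile_pos β x).ne' hx

variable [NormedSpace ℝ E] [FiniteDimensional ℝ E] [MeasurableSpace E] [BorelSpace E]
  (μ : Measure E) [μ.IsAddHaarMeasure]

lemma integrable_decayProfile {β : ℝ} (hβ : finrank ℝ E < β) : Integrable (decayProfile β) μ :=
  integrable_one_add_norm hβ

lemma integral_decayProfile_pos {β : ℝ} (hβ : finrank ℝ E < β) :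
    0 < ∫ x, decayProfile β x ∂μ := by
  have hexp : decayProfile β = fun x : E => exp (-(β * log (1 + ‖x‖))) :=
    funext (decayProfile_eq_exp β)
  have hint := integrable_decayProfile μ hβ
  rw [hexp] at hint ⊢
  exact integral_exp_pos hint

lemma memLp_decayProfile {β p : ℝ} (hp : 0 < p) (hβp : finrank ℝ E < β * p) :
    MemLp (decayProfile β) (ENNReal.ofReal p) μ := by
  have hmeas : AEStronglyMeasurable (decayProfile β) μ :=
    Measurable.aestronglyMeasurable (by unfold decayProfile; fun_prop)
  rw [← integrable_norm_rpow_iff hmeas (by simpa using hp) ENNReal.ofReal_ne_top,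
    ENNReal.toReal_ofReal hp.le]
  simpa only [norm_of_nonneg (decayProfile_pos β _).le, decayProfile_rpow]
    using integrable_decayProfile μ hβp

end DecayProfile

section LinearGrowth

variable {E : Type*} [NormedAddCommGroup E] [NormedSpace ℝ E] (T : E ≃L[ℝ] E) {x y : E}

lemma one_add_norm_le_of_norm_sub_apply_le (h : ‖y - T x‖ ≤ 1) :
    1 + ‖y‖ ≤ (2 + ‖(T : E →L[ℝ] E)‖) * (1 + ‖x‖) := by
  have hTx : ‖T x‖ ≤ ‖(T : E →L[ℝ] E)‖ * ‖x‖ := (T : E →L[ℝ] E).le_opNorm x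
  nlinarith [norm_sub_norm_le y (T x), norm_nonneg x, norm_nonneg (T : E →L[ℝ] E),
    mul_nonneg (norm_nonneg (T : E →L[ℝ] E)) (norm_nonneg x)]

lemma one_add_norm_le_symm_of_norm_sub_apply_le (h : ‖y - T x‖ ≤ 1) :
    1 + ‖x‖ ≤ (1 + ‖(T.symm : E →L[ℝ] E)‖) * (1 + ‖y‖) := by
  have hx : ‖x‖ ≤ ‖(T.symm : E →L[ℝ] E)‖ * ‖T x‖ := by
    simpa using (T.symm : E →L[ℝ] E).le_opNorm (T x)
  have hTx : ‖T x‖ ≤ 1 + ‖y‖ := by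
    linarith [norm_sub_norm_le (T x) y, norm_sub_rev y (T x)]
  nlinarith [mul_le_mul_of_nonneg_left hTx (norm_nonneg (T.symm : E →L[ℝ] E)), norm_nonneg y]

lemma abs_log_one_add_norm_sub_le (h : ‖y - T x‖ ≤ 1) :
    |log (1 + ‖x‖) - log (1 + ‖y‖)| ≤
      log (2 + ‖(T : E →L[ℝ] E)‖) + log (1 + ‖(T.symm : E →L[ℝ] E)‖) := by
  have log_sub_le {a b c : ℝ} (hb : 0 < b) (hc : 1 ≤ c) (h : a ≤ c * b) (ha : 0 < a) :
      log a - log b ≤ log c := by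
    have := log_le_log ha h
    rw [log_mul (by positivity) hb.ne'] at this
    linarith
  have hT : 0 ≤ log (2 + ‖(T : E →L[ℝ] E)‖) :=
    log_nonneg (by linarith [norm_nonneg (T : E →L[ℝ] E)])
  have hS : 0 ≤ log (1 + ‖(T.symm : E →L[ℝ] E)‖) := log_nonneg (by simp)
  rw [abs_sub_le_iff]
  constructor
  · linarith [log_sub_le (by positivity) (by simp)
      (one_add_norm_le_symm_of_norm_sub_apply_le T h) (by positivity)]
  · linarith [log_sub_le (by positivity) (by linarith [norm_nonneg (T : E →L[ℝ] E)])
      (one_add_norm_le_of_norm_sub_apply_le T h) (by positivity)]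

end LinearGrowth

section HaarIndicator

variable {E : Type*} [NormedAddCommGroup E] [MeasurableSpace E] [BorelSpace E]
  (μ : Measure E) [μ.IsAddHaarMeasure]

lemma integral_indicator_closedBall (c : E) (r M : ℝ) :
    ∫ y, (closedBall c r).indicator (fun _ => M) y ∂μ = M * μ.real (closedBall 0 r) := by
  rw [integral_indicator_const _ measurableSet_closedBall, smul_eq_mul, mul_comm,
    measureReal_def, measureReal_def, Measure.addHaar_closedBall_center]

lemma integrable_indicator_closedBall [NormedSpace ℝ E] [FiniteDimensional ℝ E]
    (c : E) (r M : ℝ) :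
    Integrable ((closedBall c r).indicator fun _ => M) μ :=
  (integrable_indicator_iff measurableSet_closedBall).2
    (integrableOn_const measure_closedBall_lt_top.ne)

end HaarIndicator

section Kernel

variable {E : Type*} [NormedAddCommGroup E] {ψ : E → ℝ} {M : ℝ}

lemma le_indicator_closedBall_of_mem (hψ : ∀ z, 0 ≤ ψ z ∧ ψ z ≤ M)
    (hsupp : ∀ z, ψ z ≠ 0 → z ∈ closedBall (0 : E) 1) {z w c : E} {r : ℝ}
    (hzw : z ∈ closedBall (0 : E) 1 → w ∈ closedBall c r) :
    ψ z ≤ (closedBall c r).indicator (fun _ => M) w := by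
  by_cases hz : ψ z = 0
  · exact hz ▸ indicator_nonneg (fun _ _ => (hψ z).1.trans (hψ z).2) w
  · rw [indicator_of_mem (hzw (hsupp z hz))]
    exact (hψ z).2

variable [NormedSpace ℝ E] (T : E ≃L[ℝ] E)

lemma kernel_le_indicator_add (hψ : ∀ z, 0 ≤ ψ z ∧ ψ z ≤ M)
    (hsupp : ∀ z, ψ z ≠ 0 → z ∈ closedBall (0 : E) 1) (x y : E) :
    ψ (y - T x) + ψ (x - T y) ≤ (closedBall (T x) 1).indicator (fun _ => M) y +
      (closedBall (T.symm x) ‖(T.symm : E →L[ℝ] E)‖).indicator (fun _ => M) y := by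
  refine add_le_add (le_indicator_closedBall_of_mem hψ hsupp fun h => ?_)
    (le_indicator_closedBall_of_mem hψ hsupp fun h => ?_)
  · rwa [mem_closedBall_zero_iff, ← dist_eq_norm] at h
  · rw [mem_closedBall_zero_iff] at h
    rw [mem_closedBall, dist_comm, dist_eq_norm]
    calc ‖T.symm x - y‖ = ‖(T.symm : E →L[ℝ] E) (x - T y)‖ := by simp
      _ ≤ ‖(T.symm : E →L[ℝ] E)‖ * ‖x - T y‖ := (T.symm : E →L[ℝ] E).le_opNorm _
      _ ≤ ‖(T.symm : E →L[ℝ] E)‖ := mul_le_of_le_one_right (norm_nonneg _) h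

lemma abs_log_one_add_norm_sub_le_of_ne_zero
    (hsupp : ∀ z, ψ z ≠ 0 → z ∈ closedBall (0 : E) 1) {x y : E}
    (h : ψ (y - T x) + ψ (x - T y) ≠ 0) :
    |log (1 + ‖x‖) - log (1 + ‖y‖)| ≤
      log (2 + ‖(T : E →L[ℝ] E)‖) + log (1 + ‖(T.symm : E →L[ℝ] E)‖) := by
  by_cases hx : ψ (y - T x) = 0
  · rw [abs_sub_comm]
    exact abs_log_one_add_norm_sub_le T
      (mem_closedBall_zero_iff.1 (hsupp _ (by simpa [hx] using h)))
  · exact abs_log_one_add_norm_sub_le T (mem_closedBall_zero_iff.1 (hsupp _ hx))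

variable [FiniteDimensional ℝ E] [MeasurableSpace E] [BorelSpace E]
  (μ : Measure E) [μ.IsAddHaarMeasure]
  (hψmeas : Measurable ψ) (hψ : ∀ z, 0 ≤ ψ z ∧ ψ z ≤ M)
  (hsupp : ∀ z, ψ z ≠ 0 → z ∈ closedBall (0 : E) 1)
include hψmeas hψ hsupp

lemma integrable_kernel (x : E) : Integrable (fun y => ψ (y - T x) + ψ (x - T y)) μ := by
  refine Integrable.mono' ((integrable_indicator_closedBall μ (T x) 1 M).add
    (integrable_indicator_closedBall μ (T.symm x) ‖(T.symm : E →L[ℝ] E)‖ M))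
    (Measurable.aestronglyMeasurable (by fun_prop)) (ae_of_all _ fun y => ?_)
  rw [Real.norm_of_nonneg (add_nonneg (hψ _).1 (hψ _).1)]
  exact kernel_le_indicator_add T hψ hsupp x y

lemma integral_kernel_le (x : E) :
    ∫ y, ψ (y - T x) + ψ (x - T y) ∂μ ≤
      M * (μ.real (closedBall 0 1) + μ.real (closedBall 0 ‖(T.symm : E →L[ℝ] E)‖)) := by
  refine (integral_mono (integrable_kernel T μ hψmeas hψ hsupp x)
    ((integrable_indicator_closedBall μ _ 1 M).add (integrable_indicator_closedBall μ _ _ M))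
    (kernel_le_indicator_add T hψ hsupp x)).trans_eq ?_
  rw [integral_add' (integrable_indicator_closedBall μ _ 1 M)
    (integrable_indicator_closedBall μ _ _ M), integral_indicator_closedBall,
    integral_indicator_closedBall, mul_add]

end Kernel

section FirstEigenvalue

variable {d : ℕ} {p : ℝ} {K : EuclideanSpace ℝ (Fin d) → EuclideanSpace ℝ (Fin d) → ℝ}

lemma rayleigh_quotient_nonneg (hK : ∀ x y, 0 ≤ K x y) (u : EuclideanSpace ℝ (Fin d) → ℝ) :
    0 ≤ (∫ x, ∫ y, K x y * |u x - u y| ^ p) / ∫ x, |u x| ^ p :=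
  div_nonneg
    (integral_nonneg fun x => integral_nonneg fun y => mul_nonneg (hK x y) (by positivity))
    (integral_nonneg fun x => by positivity)

lemma lambdaOne_nonneg (hK : ∀ x y, 0 ≤ K x y) : 0 ≤ lambdaOne d p K :=
  Real.sInf_nonneg <| by
    rintro _ ⟨u, -, -, rfl⟩
    exact rayleigh_quotient_nonneg hK u

lemma lambdaOne_le (hK : ∀ x y, 0 ≤ K x y) {u : EuclideanSpace ℝ (Fin d) → ℝ}
    (hu : MemLp u (ENNReal.ofReal p) volume) (hu0 : ¬ u =ᵐ[volume] 0) :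
    lambdaOne d p K ≤ (∫ x, ∫ y, K x y * |u x - u y| ^ p) / ∫ x, |u x| ^ p :=
  csInf_le ⟨0, by rintro _ ⟨v, -, -, rfl⟩; exact rayleigh_quotient_nonneg hK v⟩ ⟨u, hu, hu0, rfl⟩

lemma lambdaOne_le_of_integral_le {L V : ℝ} (hp : 0 < p) (hL : 0 ≤ L)
    (hK : ∀ x y, 0 ≤ K x y) (hKint : ∀ x, Integrable (K x)) (hKV : ∀ x, ∫ y, K x y ≤ V)
    (hKL : ∀ x y, K x y ≠ 0 → |log (1 + ‖x‖) - log (1 + ‖y‖)| ≤ L) :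
    lambdaOne d p K ≤ V * ((d + 1) / p * L * exp ((d + 1) / p * L)) ^ p := by
  set β : ℝ := (d + 1) / p
  set c : ℝ := β * L * exp (β * L)
  set w := decayProfile (E := EuclideanSpace ℝ (Fin d)) (d + 1)
  have hβp : β * p = d + 1 := div_mul_cancel₀ _ hp.ne'
  have hβ : 0 ≤ β := by positivity
  have hc : 0 ≤ c := mul_nonneg (mul_nonneg hβ hL) (exp_pos _).le
  have hfin : (finrank ℝ (EuclideanSpace ℝ (Fin d)) : ℝ) < d + 1 := by simp
  have hpow (x) : |decayProfile β x| ^ p = w x := by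
    rw [abs_of_pos (decayProfile_pos β x), decayProfile_rpow, hβp]
  have hw := integrable_decayProfile volume hfin
  have hcw (x) : 0 ≤ c ^ p * w x := mul_nonneg (rpow_nonneg hc p) (decayProfile_pos _ x).le
  have hdiff (x y) :
      K x y * |decayProfile β x - decayProfile β y| ^ p ≤ K x y * (c ^ p * w x) := by
    rcases eq_or_ne (K x y) 0 with h | h
    · simp [h]
    refine mul_le_mul_of_nonneg_left ?_ (hK x y)
    calc |decayProfile β x - decayProfile β y| ^ p
        ≤ (c * decayProfile β x) ^ p :=
          rpow_le_rpow (abs_nonneg _) (abs_decayProfile_sub_le hβ (hKL x y h)) hp.le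
      _ = c ^ p * w x := by
          rw [mul_rpow hc (decayProfile_pos β x).le, decayProfile_rpow, hβp]
  have hinner (x) : ∫ y, K x y * |decayProfile β x - decayProfile β y| ^ p ≤ V * c ^ p * w x :=
    calc _ ≤ ∫ y, K x y * (c ^ p * w x) :=
          integral_mono_of_nonneg (ae_of_all _ fun y => mul_nonneg (hK x y) (by positivity))
            ((hKint x).mul_const _) (ae_of_all _ (hdiff x))
      _ ≤ V * c ^ p * w x := by
          rw [integral_mul_const, mul_assoc]
          exact mul_le_mul_of_nonneg_right (hKV x) (hcw x)
  have houter : ∫ x, ∫ y, K x y * |decayProfile β x - decayProfile β y| ^ p ≤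
      V * c ^ p * ∫ x, w x :=
    (integral_mono_of_nonneg (ae_of_all _ fun x => integral_nonneg fun y =>
        mul_nonneg (hK x y) (by positivity)) (hw.const_mul _) (ae_of_all _ hinner)).trans_eq
      (integral_const_mul _ _)
  calc lambdaOne d p K
      ≤ (∫ x, ∫ y, K x y * |decayProfile β x - decayProfile β y| ^ p) /
          ∫ x, |decayProfile β x| ^ p :=
        lambdaOne_le hK (memLp_decayProfile volume hp (hβp ▸ hfin))
          (decayProfile_not_ae_eq_zero volume β)
    _ ≤ V * c ^ p := by
        simp_rw [hpow]
        rw [div_le_iff₀ (integral_decayProfile_pos volume hfin)]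
        exact houter

end FirstEigenvalue

lemma tendsto_rpow_one_div_of_le_mul_rpow {f c : ℝ → ℝ} {V : ℝ} (hV : 0 ≤ V)
    (hf : ∀ᶠ p in atTop, 0 ≤ f p ∧ f p ≤ V * c p ^ p) (hc0 : ∀ᶠ p in atTop, 0 ≤ c p)
    (hc : Tendsto c atTop (𝓝 0)) :
    Tendsto (fun p => f p ^ (1 / p)) atTop (𝓝 0) := by
  refine squeeze_zero' (hf.mono fun p hp => rpow_nonneg hp.1 _) ?_
    (by simpa using hc.const_mul (max 1 V))
  filter_upwards [hf, hc0, eventually_ge_atTop 1] with p ⟨hf0, hfp⟩ hcp hp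
  have hp0 : 0 < p := by linarith
  calc f p ^ (1 / p) ≤ (V * c p ^ p) ^ (1 / p) := rpow_le_rpow hf0 hfp (by positivity)
    _ = V ^ (1 / p) * c p := by
        rw [mul_rpow hV (rpow_nonneg hcp _), ← rpow_mul hcp, mul_one_div_cancel hp0.ne',
          rpow_one]
    _ ≤ max 1 V * c p := by
        refine mul_le_mul_of_nonneg_right ?_ hcp
        rcases le_total V 1 with hV1 | hV1
        · exact (rpow_le_one hV hV1 (by positivity)).trans (le_max_left _ _)
        · exact (rpow_le_self_of_one_le hV1 ((div_le_one hp0).2 hp)).trans (le_max_right _ _)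

theorem tendsto_rpow_first_eigenvalue_general (d : ℕ)
    (ψ : EuclideanSpace ℝ (Fin d) → ℝ)
    (hψmeas : Measurable ψ) (hψnn : ∀ z, 0 ≤ ψ z)
    (hψbdd : ∃ M : ℝ, ∀ z, ψ z ≤ M)
    (hψsupp : ∀ z, ψ z ≠ 0 → z ∈ Metric.closedBall (0 : EuclideanSpace ℝ (Fin d)) 1)
    (A : Matrix (Fin d) (Fin d) ℝ) (hA : IsUnit A.det) :
    Tendsto (fun p : ℝ =>
        (lambdaOne d p (fun x y =>
          ψ (y - Matrix.toEuclideanLin A x) + ψ (x - Matrix.toEuclideanLin A y))) ^ (1 / p))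
      atTop (nhds 0) := by
  let E := EuclideanSpace ℝ (Fin d)
  obtain ⟨M, hM⟩ := hψbdd
  have hψ (z) : 0 ≤ ψ z ∧ ψ z ≤ M := ⟨hψnn z, hM z⟩
  let T : E ≃L[ℝ] E :=
    (Matrix.toLinearEquiv (EuclideanSpace.basisFun (Fin d) ℝ).toBasis A hA).toContinuousLinearEquiv
  change Tendsto (fun p => lambdaOne d p (fun x y => ψ (y - T x) + ψ (x - T y)) ^ (1 / p)) _ _
  set L := log (2 + ‖(T : E →L[ℝ] E)‖) + log (1 + ‖(T.symm : E →L[ℝ] E)‖)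
  have hL : 0 ≤ L := add_nonneg (log_nonneg (by linarith [norm_nonneg (T : E →L[ℝ] E)]))
    (log_nonneg (le_add_of_nonneg_right (norm_nonneg _)))
  have hK (x y) : 0 ≤ ψ (y - T x) + ψ (x - T y) := add_nonneg (hψnn _) (hψnn _)
  have hKV := integral_kernel_le T volume hψmeas hψ hψsupp
  have hβ : Tendsto (fun p : ℝ => (d + 1) / p) atTop (𝓝 0) :=
    tendsto_const_nhds.div_atTop tendsto_id
  refine tendsto_rpow_one_div_of_le_mul_rpow ((integral_nonneg (hK 0)).trans (hKV 0)) ?_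
    (c := fun p => (d + 1) / p * L * exp ((d + 1) / p * L)) ?_
    (by simpa using (hβ.mul_const L).mul (hβ.mul_const L).rexp)
  · filter_upwards [eventually_gt_atTop 0] with p hp
    exact ⟨lambdaOne_nonneg hK, lambdaOne_le_of_integral_le hp hL hK
      (integrable_kernel T volume hψmeas hψ hψsupp) hKV
      fun x y => abs_log_one_add_norm_sub_le_of_ne_zero T hψsupp⟩
  · filter_upwards [eventually_gt_atTop 0] with p hp
    positivity

theorem tendsto_rpow_first_eigenvalue (d : ℕ) (hd : 1 ≤ d)
    (ψ : EuclideanSpace ℝ (Fin d) → ℝ)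
    (hψmeas : Measurable ψ) (hψnn : ∀ z, 0 ≤ ψ z)
    (hψbdd : ∃ M : ℝ, ∀ z, ψ z ≤ M)
    (hψsupp : ∀ z, ψ z ≠ 0 → z ∈ Metric.closedBall (0 : EuclideanSpace ℝ (Fin d)) 1)
    (A : Matrix (Fin d) (Fin d) ℝ) (hA : IsUnit A.det) :
    Tendsto (fun p : ℝ =>
        (lambdaOne d p (fun x y =>
          ψ (y - Matrix.toEuclideanLin A x) + ψ (x - Matrix.toEuclideanLin A y))) ^ (1 / p))
      atTop (nhds 0) :=
  tendsto_rpow_first_eigenvalue_general d ψ hψmeas hψnn hψbdd hψsupp A hA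
end

section
/- The first eigenvalue on the whole space is the limit of the first eigenvalues on expanding balls: λ_{1,p}(ℝ^d) = lim_{R→∞} λ_{1,p}(B_R), where B_R is the ball of radius R centered at the origin. -/
open MeasureTheory Filter

/-- The first eigenvalue of the nonlocal `p`-Laplacian with kernel `K` on a domain `Ω`:
functions in `L^p(Ω)` are extended by zero outside `Ω`. -/
noncomputable def lambdaOneDom (d : ℕ) (p : ℝ)
    (K : EuclideanSpace ℝ (Fin d) → EuclideanSpace ℝ (Fin d) → ℝ)
    (Ω : Set (EuclideanSpace ℝ (Fin d))) : ℝ :=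
  sInf { r : ℝ |
    ∃ u : EuclideanSpace ℝ (Fin d) → ℝ,
      MemLp u (ENNReal.ofReal p) volume ∧
      (∀ x, x ∉ Ω → u x = 0) ∧
      ¬ u =ᵐ[volume] (0 : EuclideanSpace ℝ (Fin d) → ℝ) ∧
      r = (∫ x, ∫ y, K x y * |u x - u y| ^ p) / (∫ x in Ω, |u x| ^ p) }

/-!
Extending a function admissible on `B_R` by zero gives a function admissible on `ℝ^d` with the
same Rayleigh quotient, so `λ₁(ℝ^d) ≤ λ₁(B_R)`. Conversely, the Rayleigh quotient of the truncation
`1_{B_R} u` of an admissible `u` tends to that of `u`. For the energy this is dominated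
convergence: `K(x, y) |v(x) - v(y)|^p ≤ 2^p K(x, y) (|u(x)|^p + |u(y)|^p)` whenever `|v| ≤ |u|`,
and the right-hand side is integrable because the kernel is symmetric with row integrals
`∫ K(x, y) dy = (1 + |det A|⁻¹) ∫ ψ`.
-/

open Set Function Topology

lemma abs_sub_rpow_le {p : ℝ} (hp : 0 ≤ p) (a b : ℝ) :
    |a - b| ^ p ≤ 2 ^ p * (|a| ^ p + |b| ^ p) := by
  wlog hab : |b| ≤ |a| generalizing a b
  · rw [abs_sub_comm, add_comm]
    exact this b a (le_of_not_ge hab)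
  calc |a - b| ^ p ≤ (2 * |a|) ^ p :=
        Real.rpow_le_rpow (abs_nonneg _) ((abs_sub a b).trans (by linarith)) hp
    _ = 2 ^ p * |a| ^ p := Real.mul_rpow zero_le_two (abs_nonneg a)
    _ ≤ 2 ^ p * (|a| ^ p + |b| ^ p) := by
        gcongr
        exact le_add_of_nonneg_right (by positivity)

section Integrals

variable {α : Type*} [MeasurableSpace α]

lemma integrable_abs_rpow_of_memLp {μ : Measure α} {p : ℝ} (hp : 0 < p) {u : α → ℝ}
    (hu : MemLp u (ENNReal.ofReal p) μ) : Integrable (fun x => |u x| ^ p) μ := by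
  simpa [ENNReal.toReal_ofReal hp.le] using
    hu.integrable_norm_rpow (by simpa using hp) ENNReal.ofReal_ne_top

lemma integral_abs_rpow_pos {μ : Measure α} {p : ℝ} (hp : p ≠ 0) {u : α → ℝ}
    (hup : Integrable (fun x => |u x| ^ p) μ) (hu : ¬ u =ᵐ[μ] 0) :
    0 < ∫ x, |u x| ^ p ∂μ := by
  refine (integral_nonneg fun x => by positivity).lt_of_ne' fun h => hu ?_
  filter_upwards [(integral_eq_zero_iff_of_nonneg (fun x => by positivity) hup).1 h] with x hx
  simpa [Real.rpow_eq_zero (abs_nonneg _) hp] using hx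

/-- The hypotheses of Schur's test, for a symmetric nonnegative kernel. -/
structure IsSchurKernel (μ : Measure α) (K : α → α → ℝ) : Prop where
  measurable : Measurable (uncurry K)
  nonneg : ∀ x y, 0 ≤ K x y
  symm : ∀ x y, K x y = K y x
  integrable : ∀ x, Integrable (K x) μ
  exists_integral_le : ∃ C, ∀ x, ∫ y, K x y ∂μ ≤ C

noncomputable def nonlocalEnergy (μ : Measure α) (K : α → α → ℝ) (p : ℝ) (u : α → ℝ) : ℝ :=
  ∫ x, ∫ y, K x y * |u x - u y| ^ p ∂μ ∂μ

lemma nonlocalEnergy_nonneg {μ : Measure α} {K : α → α → ℝ} (hK : ∀ x y, 0 ≤ K x y) (p : ℝ)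
    (u : α → ℝ) : 0 ≤ nonlocalEnergy μ K p u :=
  integral_nonneg fun x => integral_nonneg fun y => mul_nonneg (hK x y) (by positivity)

namespace IsSchurKernel

variable {μ : Measure α} {K : α → α → ℝ}

lemma integrable_mul_fst [SFinite μ] (hK : IsSchurKernel μ K) {f : α → ℝ} (hf : Integrable f μ) :
    Integrable (fun z : α × α => K z.1 z.2 * f z.1) (μ.prod μ) := by
  obtain ⟨C, hC⟩ := hK.exists_integral_le
  have hmeas : AEStronglyMeasurable (fun z : α × α => K z.1 z.2 * f z.1) (μ.prod μ) :=
    hK.measurable.aestronglyMeasurable.mul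
      (hf.1.comp_quasiMeasurePreserving Measure.quasiMeasurePreserving_fst)
  refine (integrable_prod_iff hmeas).2
    ⟨ae_of_all _ fun x => (hK.integrable x).mul_const (f x), ?_⟩
  refine (hf.norm.const_mul C).mono' hmeas.norm.integral_prod_right' (ae_of_all _ fun x => ?_)
  have hrow : ∫ y, ‖K x y * f x‖ ∂μ = (∫ y, K x y ∂μ) * ‖f x‖ := by
    simp_rw [norm_mul, Real.norm_of_nonneg (hK.nonneg x _)]
    exact integral_mul_const _ _
  rw [hrow, Real.norm_of_nonneg (mul_nonneg (integral_nonneg (hK.nonneg x)) (norm_nonneg _))]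
  gcongr
  exact hC x

lemma integrable_mul_snd [SFinite μ] (hK : IsSchurKernel μ K) {f : α → ℝ} (hf : Integrable f μ) :
    Integrable (fun z : α × α => K z.1 z.2 * f z.2) (μ.prod μ) :=
  (hK.integrable_mul_fst hf).swap.congr (ae_of_all _ fun z => by simp [hK.symm z.2 z.1])

lemma norm_mul_abs_sub_rpow_le (hK : IsSchurKernel μ K) {p : ℝ} (hp : 0 ≤ p) {u v : α → ℝ}
    (hvu : ∀ x, |v x| ≤ |u x|) (x y : α) :
    ‖K x y * |v x - v y| ^ p‖ ≤ 2 ^ p * (K x y * |u x| ^ p + K x y * |u y| ^ p) := by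
  rw [Real.norm_of_nonneg (mul_nonneg (hK.nonneg x y) (by positivity)), ← mul_add,
    mul_left_comm]
  refine mul_le_mul_of_nonneg_left ((abs_sub_rpow_le hp _ _).trans ?_) (hK.nonneg x y)
  gcongr 2 ^ p * (?_ + ?_)
  · exact Real.rpow_le_rpow (abs_nonneg _) (hvu x) hp
  · exact Real.rpow_le_rpow (abs_nonneg _) (hvu y) hp

lemma aestronglyMeasurable_mul_abs_sub_rpow (hK : IsSchurKernel μ K) (p : ℝ) {v : α → ℝ}
    (hv : AEStronglyMeasurable v μ) :
    AEStronglyMeasurable (fun z : α × α => K z.1 z.2 * |v z.1 - v z.2| ^ p) (μ.prod μ) := by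
  have hv₁ : AEMeasurable (fun z : α × α => v z.1) (μ.prod μ) :=
    hv.aemeasurable.comp_quasiMeasurePreserving Measure.quasiMeasurePreserving_fst
  have hv₂ : AEMeasurable (fun z : α × α => v z.2) (μ.prod μ) :=
    hv.aemeasurable.comp_quasiMeasurePreserving Measure.quasiMeasurePreserving_snd
  exact (hK.measurable.aemeasurable.mul ((hv₁.sub hv₂).abs.pow_const p)).aestronglyMeasurable

theorem tendsto_nonlocalEnergy_indicator [SFinite μ] (hK : IsSchurKernel μ K) {ι : Type*}
    {l : Filter ι} [l.IsCountablyGenerated] {s : ι → Set α} (hs : AECover μ l s) {p : ℝ}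
    (hp : 0 ≤ p) {u : α → ℝ} (hu : AEStronglyMeasurable u μ) (hup : Integrable (fun x => |u x| ^ p) μ) :
    Tendsto (fun i => nonlocalEnergy μ K p ((s i).indicator u)) l
      (𝓝 (nonlocalEnergy μ K p u)) := by
  have hdom := ((hK.integrable_mul_fst hup).add (hK.integrable_mul_snd hup)).const_mul (2 ^ p)
  have henergy : ∀ v : α → ℝ, AEStronglyMeasurable v μ → (∀ x, |v x| ≤ |u x|) →
      nonlocalEnergy μ K p v = ∫ z, K z.1 z.2 * |v z.1 - v z.2| ^ p ∂(μ.prod μ) :=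
    fun v hv hvu => integral_integral <| hdom.mono' (hK.aestronglyMeasurable_mul_abs_sub_rpow p hv)
      (ae_of_all _ fun z => hK.norm_mul_abs_sub_rpow_le hp hvu z.1 z.2)
  have hind : ∀ i x, |(s i).indicator u x| ≤ |u x| := fun i x => by
    simpa only [Real.norm_eq_abs] using norm_indicator_le_norm_self u x
  have hmeas : ∀ i, AEStronglyMeasurable ((s i).indicator u) μ :=
    fun i => hu.indicator (hs.measurableSet i)
  simp_rw [henergy _ (hmeas _) (hind _), henergy u hu fun x => le_rfl]
  refine tendsto_integral_filter_of_dominated_convergence _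
    (Eventually.of_forall fun i => hK.aestronglyMeasurable_mul_abs_sub_rpow p (hmeas i))
    (Eventually.of_forall fun i => ae_of_all _ fun z =>
      hK.norm_mul_abs_sub_rpow_le hp (hind i) z.1 z.2) hdom ?_
  have h₁ := Measure.quasiMeasurePreserving_fst.ae (μb := μ) (μa := μ.prod μ) hs.ae_eventually_mem
  have h₂ := Measure.quasiMeasurePreserving_snd.ae (μb := μ) (μa := μ.prod μ) hs.ae_eventually_mem
  filter_upwards [h₁, h₂] with z hz₁ hz₂
  refine tendsto_const_nhds.congr' ?_
  filter_upwards [hz₁, hz₂] with i hi₁ hi₂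
  rw [indicator_of_mem hi₁, indicator_of_mem hi₂]

end IsSchurKernel

end Integrals

section LinearKernel

variable {E : Type*} [NormedAddCommGroup E] [NormedSpace ℝ E] [MeasurableSpace E] [BorelSpace E]
  [FiniteDimensional ℝ E] {μ : Measure E} [μ.IsAddHaarMeasure] {ψ : E → ℝ} {T : E →ₗ[ℝ] E}

lemma integrable_comp_sub_linearMap (hψ : Integrable ψ μ) (hT : LinearMap.det T ≠ 0) (x : E) :
    Integrable (fun y => ψ (x - T y)) μ := by
  have hTm : Measurable T := T.continuous_of_finiteDimensional.measurable
  have hψx : Integrable (fun z => ψ (x - z)) (Measure.map T μ) := by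
    rw [Measure.map_linearMap_addHaar_eq_smul_addHaar μ hT]
    exact (hψ.comp_sub_left x).smul_measure ENNReal.ofReal_ne_top
  exact (integrable_map_measure hψx.1 hTm.aemeasurable).1 hψx

lemma integral_comp_sub_linearMap (hψ : Integrable ψ μ) (hT : LinearMap.det T ≠ 0) (x : E) :
    ∫ y, ψ (x - T y) ∂μ = |(LinearMap.det T)⁻¹| * ∫ z, ψ z ∂μ := by
  have hTm : Measurable T := T.continuous_of_finiteDimensional.measurable
  have hψx : AEStronglyMeasurable (fun z => ψ (x - z)) (Measure.map T μ) := by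
    rw [Measure.map_linearMap_addHaar_eq_smul_addHaar μ hT]
    exact (hψ.comp_sub_left x).1.smul_measure _
  rw [← integral_map hTm.aemeasurable hψx, Measure.map_linearMap_addHaar_eq_smul_addHaar μ hT,
    integral_smul_measure, integral_sub_left_eq_self, ENNReal.toReal_ofReal (abs_nonneg _),
    smul_eq_mul]

theorem isSchurKernel_comp_sub_linearMap (hψm : Measurable ψ) (hψ : Integrable ψ μ)
    (hψnn : ∀ z, 0 ≤ ψ z) (hT : LinearMap.det T ≠ 0) :
    IsSchurKernel μ (fun x y => ψ (y - T x) + ψ (x - T y)) where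
  measurable := by
    have hTm : Measurable T := T.continuous_of_finiteDimensional.measurable
    fun_prop
  nonneg x y := add_nonneg (hψnn _) (hψnn _)
  symm x y := add_comm _ _
  integrable x := (hψ.comp_sub_right (T x)).add (integrable_comp_sub_linearMap hψ hT x)
  exists_integral_le := ⟨(1 + |(LinearMap.det T)⁻¹|) * ∫ z, ψ z ∂μ, fun x => by
    rw [integral_add (hψ.comp_sub_right (T x)) (integrable_comp_sub_linearMap hψ hT x),
      integral_sub_right_eq_self, integral_comp_sub_linearMap hψ hT, one_add_mul]⟩

end LinearKernel

section FirstEigenvalue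

variable {d : ℕ} {p : ℝ} {K : EuclideanSpace ℝ (Fin d) → EuclideanSpace ℝ (Fin d) → ℝ}

lemma exists_memLp_not_ae_eq_zero_of_isOpen {Ω : Set (EuclideanSpace ℝ (Fin d))} (hΩ : IsOpen Ω)
    (hne : Ω.Nonempty) : ∃ u : EuclideanSpace ℝ (Fin d) → ℝ, MemLp u (ENNReal.ofReal p) volume ∧
      (∀ x, x ∉ Ω → u x = 0) ∧ ¬ u =ᵐ[volume] 0 := by
  obtain ⟨x, hx⟩ := hne
  obtain ⟨ε, hε, hball⟩ := Metric.isOpen_iff.1 hΩ x hx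
  refine ⟨(Metric.ball x ε).indicator 1,
    memLp_indicator_const _ measurableSet_ball 1 (Or.inr measure_ball_lt_top.ne),
    fun y hy => indicator_of_notMem (fun h => hy (hball h)) _, fun h => ?_⟩
  rw [indicator_ae_eq_zero, Function.support_one, inter_univ] at h
  exact (Metric.measure_ball_pos volume x hε).ne' h

lemma lambdaOneDom_le (hK : ∀ x y, 0 ≤ K x y) (hp : p ≠ 0) {Ω : Set (EuclideanSpace ℝ (Fin d))}
    {u : EuclideanSpace ℝ (Fin d) → ℝ} (hu : MemLp u (ENNReal.ofReal p) volume)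
    (huΩ : ∀ x, x ∉ Ω → u x = 0) (hpos : 0 < ∫ x in Ω, |u x| ^ p) :
    lambdaOneDom d p K Ω ≤ nonlocalEnergy volume K p u / ∫ x in Ω, |u x| ^ p := by
  refine csInf_le ⟨0, ?_⟩ ⟨u, hu, huΩ, fun h => hpos.ne' ?_, rfl⟩
  · rintro _ ⟨v, -, -, -, rfl⟩
    exact div_nonneg (nonlocalEnergy_nonneg hK p v)
      (setIntegral_nonneg_of_ae (ae_of_all _ fun x => by positivity))
  · refine (integral_congr_ae (ae_restrict_of_ae (h.mono fun x hx => ?_))).trans (integral_zero _ _)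
    simp [hx, Real.zero_rpow hp]

lemma lambdaOne_le_lambdaOneDom (hK : ∀ x y, 0 ≤ K x y) (hp : p ≠ 0)
    {Ω : Set (EuclideanSpace ℝ (Fin d))} (hΩ : IsOpen Ω) (hne : Ω.Nonempty) :
    lambdaOne d p K ≤ lambdaOneDom d p K Ω := by
  obtain ⟨u, hu, huΩ, hu0⟩ := exists_memLp_not_ae_eq_zero_of_isOpen (p := p) hΩ hne
  refine csInf_le_csInf ⟨0, ?_⟩ ⟨_, u, hu, huΩ, hu0, rfl⟩ ?_
  · rintro _ ⟨v, -, -, rfl⟩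
    exact div_nonneg (nonlocalEnergy_nonneg hK p v) (integral_nonneg fun x => by positivity)
  · rintro _ ⟨v, hv, hvΩ, hv0, rfl⟩
    refine ⟨v, hv, hv0, ?_⟩
    rw [setIntegral_eq_integral_of_forall_compl_eq_zero fun x hx => by
      simp [hvΩ x hx, Real.zero_rpow hp]]

theorem IsSchurKernel.eventually_lambdaOneDom_lt (hK : IsSchurKernel volume K) (hp : 0 < p)
    {ι : Type*} {l : Filter ι} [l.IsCountablyGenerated] {s : ι → Set (EuclideanSpace ℝ (Fin d))}
    (hs : AECover volume l s) {u : EuclideanSpace ℝ (Fin d) → ℝ}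
    (hu : MemLp u (ENNReal.ofReal p) volume) (hu0 : ¬ u =ᵐ[volume] 0) {b : ℝ}
    (hb : nonlocalEnergy volume K p u / ∫ x, |u x| ^ p < b) :
    ∀ᶠ i in l, lambdaOneDom d p K (s i) < b := by
  have hup := integrable_abs_rpow_of_memLp hp hu
  have hden : Tendsto (fun i => ∫ x in s i, |(s i).indicator u x| ^ p) l
      (𝓝 (∫ x, |u x| ^ p)) := by
    refine (hs.integral_tendsto_of_countably_generated hup).congr fun i => ?_
    exact setIntegral_congr_fun (hs.measurableSet i) fun x hx => by rw [indicator_of_mem hx]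
  have hpos := integral_abs_rpow_pos hp.ne' hup hu0
  have hquot := (hK.tendsto_nonlocalEnergy_indicator hs hp.le hu.1 hup).div hden hpos.ne'
  filter_upwards [hden.eventually_const_lt hpos, hquot.eventually_lt_const hb] with i hi_pos hi_lt
  exact (lambdaOneDom_le hK.nonneg hp.ne' (hu.indicator (hs.measurableSet i))
    (fun x hx => indicator_of_notMem hx u) hi_pos).trans_lt hi_lt

end FirstEigenvalue

theorem first_eigenvalue_limit_of_balls_general (d : ℕ) (p : ℝ) (hp : 1 ≤ p)
    (ψ : EuclideanSpace ℝ (Fin d) → ℝ)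
    (hψmeas : Measurable ψ) (hψnn : ∀ z, 0 ≤ ψ z)
    (hψbdd : ∃ M : ℝ, ∀ z, ψ z ≤ M)
    (hψsupp : ∀ z, ψ z ≠ 0 → z ∈ Metric.closedBall (0 : EuclideanSpace ℝ (Fin d)) 1)
    (A : Matrix (Fin d) (Fin d) ℝ) (hA : IsUnit A.det)
    (K : EuclideanSpace ℝ (Fin d) → EuclideanSpace ℝ (Fin d) → ℝ)
    (hK : K = fun x y =>
      ψ (y - Matrix.toEuclideanLin A x) + ψ (x - Matrix.toEuclideanLin A y)) :
    Tendsto (fun R : ℝ => lambdaOneDom d p K (Metric.ball 0 R)) atTop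
      (nhds (lambdaOne d p K)) := by
  obtain ⟨M, hψbdd⟩ := hψbdd
  have hp₀ : 0 < p := by linarith
  have hψint : Integrable ψ := by
    refine (integrableOn_iff_integrable_of_support_subset hψsupp).1 ?_
    exact Measure.integrableOn_of_bounded measure_closedBall_lt_top.ne hψmeas.aestronglyMeasurable
      (ae_of_all _ fun z => (Real.norm_of_nonneg (hψnn z)).trans_le (hψbdd z))
  have hdet : LinearMap.det (Matrix.toEuclideanLin A) ≠ 0 := by
    rw [← LinearMap.det_toLin (PiLp.basisFun 2 ℝ (Fin d)) A] at hA
    exact hA.ne_zero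
  have hKS : IsSchurKernel volume K := hK ▸ isSchurKernel_comp_sub_linearMap hψmeas hψint hψnn hdet
  refine tendsto_order.2 ⟨fun a ha => ?_, fun b hb => ?_⟩
  · filter_upwards [eventually_gt_atTop 0] with R hR
    exact ha.trans_le
      (lambdaOne_le_lambdaOneDom hKS.nonneg hp₀.ne' Metric.isOpen_ball (Metric.nonempty_ball.2 hR))
  · obtain ⟨u, hu, -, hu0⟩ :=
      exists_memLp_not_ae_eq_zero_of_isOpen (p := p) isOpen_univ univ_nonempty
    obtain ⟨_, ⟨u, hu, hu0, rfl⟩, hub⟩ := exists_lt_of_csInf_lt (by exact ⟨_, u, hu, hu0, rfl⟩) hb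
    exact hKS.eventually_lambdaOneDom_lt hp₀ (aecover_ball tendsto_id) hu hu0 hub

theorem first_eigenvalue_limit_of_balls (d : ℕ) (hd : 1 ≤ d) (p : ℝ) (hp : 1 ≤ p)
    (ψ : EuclideanSpace ℝ (Fin d) → ℝ)
    (hψmeas : Measurable ψ) (hψnn : ∀ z, 0 ≤ ψ z)
    (hψbdd : ∃ M : ℝ, ∀ z, ψ z ≤ M)
    (hψsupp : ∀ z, ψ z ≠ 0 → z ∈ Metric.closedBall (0 : EuclideanSpace ℝ (Fin d)) 1)
    (A : Matrix (Fin d) (Fin d) ℝ) (hA : IsUnit A.det)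
    (K : EuclideanSpace ℝ (Fin d) → EuclideanSpace ℝ (Fin d) → ℝ)
    (hK : K = fun x y =>
      ψ (y - Matrix.toEuclideanLin A x) + ψ (x - Matrix.toEuclideanLin A y)) :
    Tendsto (fun R : ℝ => lambdaOneDom d p K (Metric.ball 0 R)) atTop
      (nhds (lambdaOne d p K)) :=
  first_eigenvalue_limit_of_balls_general d p hp ψ hψmeas hψnn hψbdd hψsupp A hA K hK
end

section
/- For every 0 < η < 1 and 1 ≤ p < ∞ there is a constant θ(η,p), given by θ(η,p) = −η/(1−η^{1/(p−1)})^{p−1} when 1 < p < ∞ and θ(η,1) = −η, such that |a − b|^p ≥ η|a|^p + θ(η,p)|b|^p for all real numbers a and b. -/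
/-!
Convexity of `x ↦ x ^ p` with weights `t` and `1 - t` at the points `x / t` and `y / (1 - t)`
gives `(x + y) ^ p ≤ x ^ p / t ^ (p - 1) + y ^ p / (1 - t) ^ (p - 1)` for every `t ∈ (0, 1)`.
Taking `x = |a - b|`, `y = |b|` (so `|a| ≤ x + y`) and `t = η ^ (1 / (p - 1))`, for which
`t ^ (p - 1) = η`, and multiplying by `η` yields the inequality; for `p = 1` it is the triangle
inequality scaled by `η ≤ 1`.
-/

theorem Real.add_rpow_le_div_rpow_add_div_rpow {p t x y : ℝ} (hp : 1 ≤ p) (ht0 : 0 < t)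
    (ht1 : t < 1) (hx : 0 ≤ x) (hy : 0 ≤ y) :
    (x + y) ^ p ≤ x ^ p / t ^ (p - 1) + y ^ p / (1 - t) ^ (p - 1) := by
  have hs : 0 < 1 - t := by linarith
  have weighted_rpow (w z : ℝ) (hw : 0 < w) (hz : 0 ≤ z) :
      w • (z / w) ^ p = z ^ p / w ^ (p - 1) := by
    rw [smul_eq_mul, Real.div_rpow hz hw.le, Real.rpow_sub_one hw.ne']
    field_simp
  have hconv := (convexOn_rpow hp).2 (Set.mem_Ici.2 (div_nonneg hx ht0.le))
    (Set.mem_Ici.2 (div_nonneg hy hs.le)) ht0.le hs.le (add_sub_cancel t 1)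
  rwa [weighted_rpow t x ht0 hx, weighted_rpow (1 - t) y hs hy, smul_eq_mul, smul_eq_mul,
    mul_div_cancel₀ x ht0.ne', mul_div_cancel₀ y hs.ne'] at hconv

theorem Real.rpow_mul_abs_rpow_sub_le_abs_sub_rpow {p t : ℝ} (hp : 1 ≤ p) (ht0 : 0 < t)
    (ht1 : t < 1) (a b : ℝ) :
    t ^ (p - 1) * |a| ^ p + -t ^ (p - 1) / (1 - t) ^ (p - 1) * |b| ^ p ≤ |a - b| ^ p := by
  have htp : 0 < t ^ (p - 1) := Real.rpow_pos_of_pos ht0 _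
  have htriangle : |a| ^ p ≤ (|a - b| + |b|) ^ p :=
    Real.rpow_le_rpow (abs_nonneg a) (by linarith [abs_sub_abs_le_abs_sub a b]) (by linarith)
  have hweighted := htriangle.trans (Real.add_rpow_le_div_rpow_add_div_rpow hp ht0 ht1
    (abs_nonneg (a - b)) (abs_nonneg b))
  have hscaled := mul_le_mul_of_nonneg_left hweighted htp.le
  rw [mul_add, mul_div_cancel₀ _ htp.ne'] at hscaled
  have hcoeff : -t ^ (p - 1) / (1 - t) ^ (p - 1) * |b| ^ p =
      -(t ^ (p - 1) * (|b| ^ p / (1 - t) ^ (p - 1))) := by ring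
  linarith

theorem elementary_inequality (η p : ℝ) (hη0 : 0 < η) (hη1 : η < 1) (hp : 1 ≤ p) :
    ∃ θ : ℝ,
      ((1 < p → θ = -η / (1 - η ^ (1 / (p - 1))) ^ (p - 1)) ∧ (p = 1 → θ = -η)) ∧
      ∀ a b : ℝ, η * |a| ^ p + θ * |b| ^ p ≤ |a - b| ^ p := by
  rcases hp.eq_or_lt with rfl | hp1
  · refine ⟨-η, ⟨fun h => absurd h (lt_irrefl 1), fun _ => rfl⟩, fun a b => ?_⟩
    simp only [Real.rpow_one]
    nlinarith [abs_sub_abs_le_abs_sub a b, abs_nonneg (a - b)]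
  · set t := η ^ (1 / (p - 1))
    have hpos : 0 < p - 1 := by linarith
    have ht : t ^ (p - 1) = η := by
      rw [← Real.rpow_mul hη0.le, one_div_mul_cancel hpos.ne', Real.rpow_one]
    refine ⟨-η / (1 - t) ^ (p - 1), ⟨fun _ => rfl, fun h => absurd h hp1.ne'⟩, fun a b => ?_⟩
    have key := Real.rpow_mul_abs_rpow_sub_le_abs_sub_rpow hp (t := t)
      (Real.rpow_pos_of_pos hη0 _) (Real.rpow_lt_one hη0.le hη1 (by positivity)) a b
    rwa [ht] at key
end

section
/- Let a(x) = Ax be an expansive invertible linear map on ℝ^d, i.e. every complex eigenvalue of A has absolute value strictly greater than one. Then there exists a sequence of measurable sets (E_j)_{j≥0} contained in the closed unit ball, each of positive Lebesgue measure, such that A⁻¹(E_j) = E_{j+1} for all j, |E_j| = |det A|^{−j}·|E_0| for all j, and E_j ∩ E_l = ∅ whenever j ≠ l. -/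
/-!
Since every eigenvalue of `A` lies outside the closed unit disc, `B = A⁻¹` has spectral radius
`< 1`, so `Bⁿ → 0` by Gelfand's formula. Consequently `‖x‖ ≤ C ‖Aⁿ x‖` for all `n` and `x`, and
`S = ⋃ₙ A⁻ⁿ (ball 0 r)` is, for small `r`, an open neighbourhood of `0` inside the unit ball with
`A⁻¹ S ⊆ S`. The sets `E_j = A⁻ʲ S \ A⁻ʲ⁻¹ S` are differences of a decreasing sequence, hence
pairwise disjoint, and `E_j = A⁻ʲ E_0`, which gives the volume formula. Finally
`|E_0| = (1 - |det A|⁻¹) |S| > 0`, because `det (Bⁿ) → 0` forces `|det A| > 1`.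
-/

open Filter Topology MeasureTheory Function

theorem tendsto_pow_atTop_nhds_zero_of_forall_norm_lt_one {A : Type*} [NormedRing A]
    [NormedAlgebra ℂ A] [CompleteSpace A] (a : A) (h : ∀ z ∈ spectrum ℂ a, ‖z‖ < 1) :
    Tendsto (a ^ ·) atTop (𝓝 0) := by
  nontriviality A
  have hρ : spectralRadius ℂ a < 1 := by
    simpa using spectrum.spectralRadius_lt_of_forall_lt a (r := 1) fun z hz => by
      simpa [← NNReal.coe_lt_coe] using h z hz
  obtain ⟨r, hρr, hr1⟩ := ENNReal.lt_iff_exists_nnreal_btwn.mp hρ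
  refine squeeze_zero_norm' ?_ (tendsto_pow_atTop_nhds_zero_of_lt_one r.2 (by exact_mod_cast hr1))
  have hgelfand := spectrum.pow_nnnorm_pow_one_div_tendsto_nhds_spectralRadius a
  filter_upwards [hgelfand.eventually_lt_const hρr, eventually_gt_atTop 0] with n hn hn0
  rw [one_div, ENNReal.rpow_inv_lt_iff (by positivity), ENNReal.rpow_natCast] at hn
  exact_mod_cast hn.le

theorem spectrum.norm_lt_one_of_mem_inv {𝕜 A : Type*} [NormedField 𝕜] [Ring A] [Algebra 𝕜 A]
    (a : Aˣ) (h : ∀ z ∈ spectrum 𝕜 (a : A), 1 < ‖z‖) {z : 𝕜} (hz : z ∈ spectrum 𝕜 (↑a⁻¹ : A)) :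
    ‖z‖ < 1 := by
  rw [← spectrum.map_inv] at hz
  have hz' := h _ hz
  rw [norm_inv, one_lt_inv_iff₀] at hz'
  exact hz'.2

namespace Matrix

variable {n : Type*} [Fintype n] [DecidableEq n]

theorem tendsto_pow_atTop_nhds_zero_of_forall_norm_lt_one (B : Matrix n n ℝ)
    (h : ∀ z ∈ spectrum ℂ (B.map (algebraMap ℝ ℂ)), ‖z‖ < 1) :
    Tendsto (B ^ ·) atTop (𝓝 0) := by
  -- The L2 operator norm makes `Matrix n n ℂ` a Banach algebra whose topology is the entrywise one.
  have hC : Tendsto ((B.map (algebraMap ℝ ℂ)) ^ ·) atTop (𝓝 0) := by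
    open scoped Matrix.Norms.L2Operator in
    exact _root_.tendsto_pow_atTop_nhds_zero_of_forall_norm_lt_one _ h
  have hre := ((continuous_id.matrix_map Complex.continuous_re).tendsto 0).comp hC
  simp only [comp_def, ← (algebraMap ℝ ℂ).mapMatrix_apply, ← map_pow] at hre
  simpa [map_map, comp_def] using hre

theorem tendsto_toEuclideanCLM_inv_pow (A : Matrix n n ℝ) (hA : IsUnit A.det)
    (h : ∀ z ∈ spectrum ℂ (A.map (algebraMap ℝ ℂ)), 1 < ‖z‖) :
    Tendsto (toEuclideanCLM (𝕜 := ℝ) A⁻¹ ^ ·) atTop (𝓝 0) := by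
  let u := Units.map (algebraMap ℝ ℂ).mapMatrix.toMonoidHom (nonsingInvUnit A hA)
  have hB := tendsto_pow_atTop_nhds_zero_of_forall_norm_lt_one A⁻¹ fun z hz =>
    spectrum.norm_lt_one_of_mem_inv u h hz
  have hcont : Continuous (toEuclideanCLM (𝕜 := ℝ) (n := n)) :=
    LinearMap.continuous_of_finiteDimensional
      (toEuclideanCLM (𝕜 := ℝ) (n := n)).toAlgEquiv.toLinearMap
  simpa only [comp_def, map_pow, map_zero] using (hcont.tendsto 0).comp hB

end Matrix

section EscapeLayer

variable {α : Type*} (f : α → α) (S : Set α)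

def escapeLayer (j : ℕ) : Set α := f^[j] ⁻¹' S \ f^[j + 1] ⁻¹' S

theorem preimage_escapeLayer (j : ℕ) : f ⁻¹' escapeLayer f S j = escapeLayer f S (j + 1) := by
  simp only [escapeLayer, Set.preimage_sdiff, ← Set.preimage_comp, ← iterate_succ]

theorem escapeLayer_eq_preimage_iterate (j : ℕ) :
    escapeLayer f S j = f^[j] ⁻¹' escapeLayer f S 0 := by
  simp only [escapeLayer, Set.preimage_sdiff, ← Set.preimage_comp, ← iterate_add, iterate_zero,
    zero_add, Set.preimage_id_eq, id, add_comm 1 j]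

variable {f S}

theorem antitone_preimage_iterate (h : f ⁻¹' S ⊆ S) : Antitone fun j => f^[j] ⁻¹' S :=
  antitone_nat_of_succ_le fun j => by
    simpa only [iterate_succ', Set.preimage_comp] using Set.preimage_mono h

theorem escapeLayer_subset (h : f ⁻¹' S ⊆ S) (j : ℕ) : escapeLayer f S j ⊆ S :=
  Set.sdiff_subset.trans (antitone_preimage_iterate h (Nat.zero_le j))

theorem pairwise_disjoint_escapeLayer (h : f ⁻¹' S ⊆ S) :
    Pairwise (Disjoint on escapeLayer f S) :=
  (pairwise_disjoint_on _).mpr fun _ _ hij =>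
    Set.disjoint_left.mpr fun _ hi hj => hi.2 (antitone_preimage_iterate h hij hj.1)

theorem MeasurableSet.escapeLayer [MeasurableSpace α] (hf : Measurable f) (hS : MeasurableSet S)
    (j : ℕ) : MeasurableSet (escapeLayer f S j) :=
  (hS.preimage (hf.iterate j)).diff (hS.preimage (hf.iterate (j + 1)))

end EscapeLayer

section AddHaar

variable {E : Type*} [NormedAddCommGroup E] [NormedSpace ℝ E] [FiniteDimensional ℝ E]
  [MeasurableSpace E] [BorelSpace E] (μ : Measure E) [μ.IsAddHaarMeasure] {f : E →ₗ[ℝ] E}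

theorem addHaar_preimage_iterate (hf : LinearMap.det f ≠ 0) (s : Set E) (j : ℕ) :
    μ (f^[j] ⁻¹' s) = ENNReal.ofReal (|LinearMap.det f| ^ (-(j : ℝ))) * μ s := by
  rw [← Module.End.coe_pow, Measure.addHaar_preimage_linearMap μ (by simpa using pow_ne_zero j hf),
    map_pow, abs_inv, abs_pow, Real.rpow_neg (abs_nonneg _), Real.rpow_natCast]

theorem addHaar_escapeLayer (hf : LinearMap.det f ≠ 0) (S : Set E) (j : ℕ) :
    μ (escapeLayer f S j) =
      ENNReal.ofReal (|LinearMap.det f| ^ (-(j : ℝ))) * μ (escapeLayer f S 0) := by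
  rw [escapeLayer_eq_preimage_iterate, addHaar_preimage_iterate μ hf]

theorem addHaar_escapeLayer_pos (hf : 1 < |LinearMap.det f|) {S : Set E} (hS : MeasurableSet S)
    (hfS : f ⁻¹' S ⊆ S) (hμS : 0 < μ S) (hμS' : μ S ≠ ⊤) (j : ℕ) :
    0 < μ (escapeLayer f S j) := by
  have hf0 : LinearMap.det f ≠ 0 := abs_pos.mp (one_pos.trans hf)
  rw [addHaar_escapeLayer μ hf0]
  refine ENNReal.mul_pos (ENNReal.ofReal_pos.mpr (by positivity)).ne' (pos_iff_ne_zero.mp ?_)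
  have hpre : μ (f ⁻¹' S) < μ S := by
    have hlt : ENNReal.ofReal (|LinearMap.det f| ^ (-((1 : ℕ) : ℝ))) < 1 :=
      ENNReal.ofReal_lt_one.mpr (Real.rpow_lt_one_of_one_lt_of_neg hf (by norm_num))
    calc μ (f ⁻¹' S) = ENNReal.ofReal (|LinearMap.det f| ^ (-((1 : ℕ) : ℝ))) * μ S := by
          rw [← addHaar_preimage_iterate μ hf0, iterate_one]
      _ < 1 * μ S := ENNReal.mul_lt_mul_left hμS.ne' hμS' hlt
      _ = μ S := one_mul _
  simp only [escapeLayer, iterate_zero, Set.preimage_id_eq, id, zero_add, iterate_one]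
  rw [measure_sdiff hfS (hS.preimage f.continuous_of_finiteDimensional.measurable).nullMeasurableSet
    (measure_ne_top_of_subset hfS hμS')]
  exact tsub_pos_of_lt hpre

end AddHaar

theorem exists_isOpen_preimage_subset_closedBall {E : Type*} [SeminormedAddCommGroup E]
    {f : E → E} (hf : Continuous f) {C : ℝ} (hC : ∀ n x, ‖x‖ ≤ C * ‖f^[n] x‖) :
    ∃ S : Set E, IsOpen S ∧ (0 : E) ∈ S ∧ S ⊆ Metric.closedBall 0 1 ∧ f ⁻¹' S ⊆ S := by
  set r := (max C 1)⁻¹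
  have hr : 0 < r := inv_pos.mpr (lt_max_of_lt_right one_pos)
  refine ⟨⋃ n, f^[n] ⁻¹' Metric.ball 0 r,
    isOpen_iUnion fun n => Metric.isOpen_ball.preimage (hf.iterate n),
    Set.mem_iUnion.mpr ⟨0, by simpa using hr⟩, ?_, ?_⟩
  · refine Set.iUnion_subset fun n x hx => ?_
    rw [Set.mem_preimage, mem_ball_zero_iff] at hx
    rw [mem_closedBall_zero_iff]
    calc ‖x‖ ≤ C * ‖f^[n] x‖ := hC n x
      _ ≤ max C 1 * ‖f^[n] x‖ := by gcongr; exact le_max_left _ _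
      _ ≤ max C 1 * r := by gcongr
      _ = 1 := mul_inv_cancel₀ (lt_max_of_lt_right one_pos).ne'
  · simp only [Set.preimage_iUnion, ← Set.preimage_comp, ← iterate_succ]
    exact Set.iUnion_subset fun n => Set.subset_iUnion (fun n => f^[n] ⁻¹' Metric.ball 0 r) (n + 1)

theorem exists_norm_le_mul_norm_iterate_of_tendsto_pow {𝕜 E : Type*} [NontriviallyNormedField 𝕜]
    [SeminormedAddCommGroup E] [NormedSpace 𝕜 E] {f : E → E} {g : E →L[𝕜] E}
    (hgf : LeftInverse g f) (hg : Tendsto (g ^ ·) atTop (𝓝 0)) :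
    ∃ C, ∀ n x, ‖x‖ ≤ C * ‖f^[n] x‖ := by
  obtain ⟨C, hC⟩ := hg.norm.bddAbove_range
  refine ⟨C, fun n x => ?_⟩
  calc ‖x‖ = ‖(g ^ n) (f^[n] x)‖ := by
        rw [← ContinuousLinearMap.coe_coe, ContinuousLinearMap.toLinearMap_pow,
          Module.End.coe_pow, ContinuousLinearMap.coe_coe, (hgf.iterate n) x]
    _ ≤ ‖g ^ n‖ * ‖f^[n] x‖ := (g ^ n).le_opNorm _
    _ ≤ C * ‖f^[n] x‖ := by gcongr; exact hC ⟨n, rfl⟩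

theorem one_lt_abs_det_of_tendsto_pow {E : Type*} [NormedAddCommGroup E] [NormedSpace ℝ E]
    [FiniteDimensional ℝ E] [Nontrivial E] {f : E →ₗ[ℝ] E} {g : E →L[ℝ] E}
    (hgf : LeftInverse g f) (hg : Tendsto (g ^ ·) atTop (𝓝 0)) :
    1 < |LinearMap.det f| := by
  have hdet : Tendsto (g.det ^ ·) atTop (𝓝 0) := by
    have := (ContinuousLinearMap.continuous_det.tendsto 0).comp hg
    simpa [comp_def, ContinuousLinearMap.det, ContinuousLinearMap.toLinearMap_pow,
      LinearMap.det_zero, Module.finrank_pos.ne'] using this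
  have hgf1 : g.det * LinearMap.det f = 1 := by
    rw [ContinuousLinearMap.det, ← LinearMap.det_comp]
    convert LinearMap.det_id
    ext x
    exact hgf x
  have hg1 : |g.det| < 1 := tendsto_pow_atTop_nhds_zero_iff.mp hdet
  rw [eq_inv_of_mul_eq_one_right hgf1, abs_inv]
  exact one_lt_inv_iff₀.mpr ⟨abs_pos.mpr (left_ne_zero_of_mul_eq_one hgf1), hg1⟩

theorem expansive_exists_disjoint_sets (d : ℕ) (hd : 1 ≤ d)
    (A : Matrix (Fin d) (Fin d) ℝ) (hA : IsUnit A.det)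
    (hexp : ∀ μ : ℂ, μ ∈ spectrum ℂ (A.map (algebraMap ℝ ℂ)) → 1 < ‖μ‖) :
    ∃ E : ℕ → Set (EuclideanSpace ℝ (Fin d)),
      (∀ j, MeasurableSet (E j)) ∧
      (∀ j, E j ⊆ Metric.closedBall (0 : EuclideanSpace ℝ (Fin d)) 1) ∧
      (∀ j, 0 < volume (E j)) ∧
      (∀ j, (Matrix.toEuclideanLin A) ⁻¹' (E j) = E (j + 1)) ∧
      (∀ j : ℕ, volume (E j) = ENNReal.ofReal (|A.det| ^ (-(j : ℝ))) * volume (E 0)) ∧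
      (∀ j l : ℕ, j ≠ l → E j ∩ E l = ∅) := by
  have : Nonempty (Fin d) := ⟨⟨0, hd⟩⟩
  let f := Matrix.toEuclideanLin A
  have hf : Continuous f := LinearMap.continuous_of_finiteDimensional f
  have hdet : LinearMap.det f = A.det := LinearMap.det_toLpLin 2 A
  have hgf : LeftInverse (Matrix.toEuclideanCLM (𝕜 := ℝ) A⁻¹) f := fun x => by
    change (Matrix.toEuclideanCLM (𝕜 := ℝ) A⁻¹ * Matrix.toEuclideanCLM (𝕜 := ℝ) A) x = x
    rw [← map_mul, Matrix.nonsing_inv_mul A hA, map_one]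
    rfl
  have hg := Matrix.tendsto_toEuclideanCLM_inv_pow A hA hexp
  obtain ⟨C, hC⟩ := exists_norm_le_mul_norm_iterate_of_tendsto_pow hgf hg
  obtain ⟨S, hSo, hS0, hS1, hfS⟩ := exists_isOpen_preimage_subset_closedBall hf hC
  have hμS : 0 < volume S := hSo.measure_pos volume ⟨0, hS0⟩
  have hμS' : volume S ≠ ⊤ := measure_ne_top_of_subset hS1 measure_closedBall_lt_top.ne
  refine ⟨escapeLayer f S, hSo.measurableSet.escapeLayer hf.measurable,
    fun j => (escapeLayer_subset hfS j).trans hS1,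
    addHaar_escapeLayer_pos volume (one_lt_abs_det_of_tendsto_pow hgf hg) hSo.measurableSet hfS
      hμS hμS',
    preimage_escapeLayer f S, fun j => ?_,
    fun j l hjl => Set.disjoint_iff_inter_eq_empty.mp (pairwise_disjoint_escapeLayer hfS hjl)⟩
  rw [← hdet]
  exact addHaar_escapeLayer volume (hdet ▸ hA.ne_zero) S j
end

section
/- Let 1 ≤ p < ∞ and let a(x) = Ax be an invertible linear map on ℝ^d such that a⁻¹ is expansive, i.e. every complex eigenvalue of A has absolute value strictly less than one. Then there exists a sequence of measurable sets (G_j)_{j≥0} contained in the closed unit ball, each of positive Lebesgue measure, with A(G_j) = G_{j+1}, |G_j| = |det A|^{j}·|G_0| and G_j ∩ G_l = ∅ for j ≠ l; moreover there exists a sequence of nonnegative functions φ_n ∈ L^p(ℝ^d), each supported in the closed unit ball and with ‖φ_n‖_{L^p(ℝ^d)} = 1, such that lim_{n→∞} ∫_{ℝ^d} |φ_n(x) − φ_n(Ax)|^p dx = | 1 − |det A|^{−1/p} |^p. -/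
/-!
Every eigenvalue of `A` has modulus `< 1`, so Gelfand's formula gives `Aᵏ → 0`; hence
`|det A| < 1` and all iterates `Aᵏ` map a small ball `B` into the unit ball. The sets
`Wₙ = ⋃_{k ≥ n} Aᵏ B` decrease with `A Wₙ = Wₙ₊₁`, so the shells `Gⱼ = Wⱼ \ Wⱼ₊₁` are disjoint,
`A Gⱼ = Gⱼ₊₁`, and `|G₀| = (1 - |det A|) |W₀| > 0`.

With `t = |det A|^(-1/p)`, the step function `φₙ = Kₙ ∑_{j ≤ n} tʲ 𝟙_{Gⱼ}`, normalized by `Kₙ`,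
has its `p`-th power integral spread evenly, `1 / (n + 1)` on each `Gⱼ`. The difference `φₙ - φₙ ∘ A` equals
`Kₙ tʲ (1 - t)` on `Gⱼ` for `j < n`, contributing `|1 - t|ᵖ` in total, while the two boundary
pieces `A⁻¹ G₀` and `Gₙ` contribute `O(1 / n)`.
-/

open MeasureTheory Filter Topology Function
open scoped NNReal ENNReal

theorem tendsto_pow_atTop_nhds_zero_of_spectralRadius_lt_one {A : Type*} [NormedRing A]
    [NormedAlgebra ℂ A] [CompleteSpace A] {a : A} (h : spectralRadius ℂ a < 1) :
    Tendsto (fun n => a ^ n) atTop (𝓝 0) := by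
  obtain ⟨r, hρr, hr1⟩ := ENNReal.lt_iff_exists_nnreal_btwn.mp h
  have hroot : ∀ᶠ n : ℕ in atTop, ‖a ^ n‖ ^ (1 / n : ℝ) < r := by
    filter_upwards
      [(spectrum.pow_norm_pow_one_div_tendsto_nhds_spectralRadius a).eventually_lt_const hρr]
      with n hn
    exact (ENNReal.ofReal_lt_iff_lt_toReal (by positivity) ENNReal.coe_ne_top).mp hn
  refine squeeze_zero_norm' ?_
    (tendsto_pow_atTop_nhds_zero_of_lt_one r.coe_nonneg (by exact_mod_cast hr1))
  filter_upwards [hroot, eventually_ne_atTop 0] with n hn hn0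
  calc ‖a ^ n‖ = (‖a ^ n‖ ^ (1 / n : ℝ)) ^ n := by
        rw [one_div, Real.rpow_inv_natCast_pow (norm_nonneg _) hn0]
    _ ≤ (r : ℝ) ^ n := pow_le_pow_left₀ (by positivity) hn.le n

open scoped Matrix.Norms.L2Operator in
theorem Matrix.tendsto_pow_atTop_nhds_zero_of_forall_norm_lt_one_s15 {n : Type*} [Fintype n]
    [DecidableEq n] [Nonempty n] {B : Matrix n n ℂ} (h : ∀ μ ∈ spectrum ℂ B, ‖μ‖ < 1) :
    Tendsto (fun k => B ^ k) atTop (𝓝 0) := by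
  refine tendsto_pow_atTop_nhds_zero_of_spectralRadius_lt_one ?_
  exact_mod_cast spectrum.spectralRadius_lt_of_forall_lt B fun μ hμ => by
    exact_mod_cast h μ hμ

theorem Matrix.tendsto_pow_of_tendsto_map_ofReal_pow {n : Type*} [Fintype n] [DecidableEq n]
    {A : Matrix n n ℝ} (h : Tendsto (fun k => (A.map (algebraMap ℝ ℂ)) ^ k) atTop (𝓝 0)) :
    Tendsto (fun k => A ^ k) atTop (𝓝 0) := by
  have hre : Tendsto (fun B : Matrix n n ℂ => B.map Complex.re) (𝓝 0) (𝓝 0) := by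
    simpa using (continuous_id.matrix_map Complex.continuous_re).tendsto (0 : Matrix n n ℂ)
  convert hre.comp h using 2 with k
  rw [Function.comp_apply, ← RingHom.mapMatrix_apply, ← map_pow, RingHom.mapMatrix_apply,
    Matrix.map_map]
  ext i j
  simp

theorem Matrix.abs_det_lt_one_of_tendsto_pow {n : Type*} [Fintype n] [DecidableEq n]
    [Nonempty n] {A : Matrix n n ℝ} (h : Tendsto (fun k => A ^ k) atTop (𝓝 0)) : |A.det| < 1 := by
  have hdet := ((continuous_id.matrix_det).tendsto (0 : Matrix n n ℝ)).comp h
  simp only [Function.comp_def, Matrix.det_pow, id, Matrix.det_zero] at hdet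
  exact tendsto_pow_atTop_nhds_zero_iff.mp hdet

theorem Matrix.det_toEuclideanLin {n : Type*} [Fintype n] [DecidableEq n] (A : Matrix n n ℝ) :
    LinearMap.det (Matrix.toEuclideanLin A) = A.det := by
  rw [Matrix.toEuclideanLin_eq_toLin_orthonormal, LinearMap.det_toLin]

theorem ContinuousLinearMap.exists_pos_iterate_image_ball_subset {𝕜 E : Type*}
    [NontriviallyNormedField 𝕜] [SeminormedAddCommGroup E] [NormedSpace 𝕜 E] {T : E →L[𝕜] E}
    (h : BddAbove (Set.range fun k : ℕ => ‖T ^ k‖)) :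
    ∃ r > 0, ∀ k, T^[k] '' Metric.ball 0 r ⊆ Metric.closedBall 0 1 := by
  obtain ⟨C, hC⟩ := h
  have hC1 : 0 < max C 1 := lt_max_of_lt_right one_pos
  refine ⟨(max C 1)⁻¹, inv_pos.mpr hC1, fun k => ?_⟩
  rintro _ ⟨x, hx, rfl⟩
  rw [mem_ball_zero_iff] at hx
  rw [mem_closedBall_zero_iff, ← FunLike.coe_pow_eq_iterate]
  calc ‖(T ^ k) x‖ ≤ ‖T ^ k‖ * ‖x‖ := (T ^ k).le_opNorm x
    _ ≤ max C 1 * (max C 1)⁻¹ :=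
        mul_le_mul ((hC ⟨k, rfl⟩).trans (le_max_left _ _)) hx.le (norm_nonneg _) hC1.le
    _ = 1 := mul_inv_cancel₀ hC1.ne'

open scoped Matrix.Norms.L2Operator in
theorem Matrix.bddAbove_norm_toEuclideanCLM_pow {n : Type*} [Fintype n] [DecidableEq n]
    {A : Matrix n n ℝ} (h : Tendsto (fun k => A ^ k) atTop (𝓝 0)) :
    BddAbove (Set.range fun k : ℕ => ‖Matrix.toEuclideanCLM (𝕜 := ℝ) A ^ k‖) := by
  simp_rw [← map_pow, Matrix.l2_opNorm_toEuclideanCLM]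
  exact h.norm.bddAbove_range

theorem IsOpenMap.iterate {X : Type*} [TopologicalSpace X] {f : X → X} (hf : IsOpenMap f) :
    ∀ n, IsOpenMap f^[n]
  | 0 => IsOpenMap.id
  | n + 1 => by rw [iterate_succ']; exact hf.comp (hf.iterate n)

section Orbit

variable {X : Type*} (f : X → X) (U : Set X)

def orbitTail (n : ℕ) : Set X := ⋃ k, f^[n + k] '' U

def orbitShell (n : ℕ) : Set X := orbitTail f U n \ orbitTail f U (n + 1)

variable {f U}

theorem image_orbitTail (n : ℕ) : f '' orbitTail f U n = orbitTail f U (n + 1) := by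
  simp only [orbitTail, Set.image_iUnion, ← Set.image_comp, ← iterate_succ', Nat.succ_add]

theorem orbitTail_succ_subset (n : ℕ) : orbitTail f U (n + 1) ⊆ orbitTail f U n :=
  Set.iUnion_subset fun k => by
    rw [Nat.succ_add_eq_add_succ]; exact Set.subset_iUnion (fun k => f^[n + k] '' U) (k + 1)

theorem orbitTail_antitone : Antitone (orbitTail f U) :=
  antitone_nat_of_succ_le orbitTail_succ_subset

theorem subset_orbitTail_zero : U ⊆ orbitTail f U 0 :=
  Set.subset_iUnion_of_subset 0 (by simp)

theorem orbitTail_subset {S : Set X} (h : ∀ k, f^[k] '' U ⊆ S) (n : ℕ) : orbitTail f U n ⊆ S :=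
  Set.iUnion_subset fun k => h (n + k)

theorem image_orbitShell (hf : Injective f) (n : ℕ) :
    f '' orbitShell f U n = orbitShell f U (n + 1) := by
  rw [orbitShell, Set.image_sdiff hf, image_orbitTail, image_orbitTail]; rfl

theorem pairwise_disjoint_orbitShell : Pairwise (Disjoint on orbitShell f U) :=
  (pairwise_disjoint_on _).mpr fun _ _ hjl =>
    Set.disjoint_left.mpr fun _ hj hl => hj.2 (orbitTail_antitone hjl hl.1)

theorem isOpen_orbitTail [TopologicalSpace X] (hf : IsOpenMap f) (hU : IsOpen U) (n : ℕ) :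
    IsOpen (orbitTail f U n) :=
  isOpen_iUnion fun k => hf.iterate (n + k) U hU

theorem measurableSet_orbitShell [TopologicalSpace X] [MeasurableSpace X]
    [OpensMeasurableSpace X] (hf : IsOpenMap f) (hU : IsOpen U) (n : ℕ) :
    MeasurableSet (orbitShell f U n) :=
  (isOpen_orbitTail hf hU n).measurableSet.diff (isOpen_orbitTail hf hU (n + 1)).measurableSet

variable [MeasurableSpace X] {μ : Measure X} {c : ℝ≥0∞}

theorem measure_orbitShell (hf : Injective f) (hμf : ∀ s, μ (f '' s) = c * μ s) (n : ℕ) :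
    μ (orbitShell f U n) = c ^ n * μ (orbitShell f U 0) := by
  induction n with
  | zero => simp
  | succ n ih => rw [← image_orbitShell hf, hμf, ih, pow_succ, mul_comm _ c, mul_assoc]

theorem measure_orbitShell_zero_pos (hμf : ∀ s, μ (f '' s) = c * μ s) (hc : c < 1)
    (hU : μ U ≠ 0) (hfin : μ (orbitTail f U 0) ≠ ∞) : 0 < μ (orbitShell f U 0) := by
  have hpos : μ (orbitTail f U 0) ≠ 0 :=
    ne_bot_of_le_ne_bot hU (measure_mono subset_orbitTail_zero)
  have hlt : μ (orbitTail f U 1) < μ (orbitTail f U 0) := by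
    rw [← image_orbitTail, hμf]
    simpa using ENNReal.mul_lt_mul_left hpos hfin hc
  refine pos_iff_ne_zero.mpr fun h0 => hlt.not_ge ?_
  calc μ (orbitTail f U 0) ≤ μ (orbitShell f U 0 ∪ orbitTail f U 1) :=
        measure_mono (by simp [orbitShell])
    _ ≤ μ (orbitShell f U 0) + μ (orbitTail f U 1) := measure_union_le _ _
    _ = μ (orbitTail f U 1) := by rw [h0, zero_add]

end Orbit

theorem LinearMap.exists_wandering_sets {E : Type*} [NormedAddCommGroup E] [NormedSpace ℝ E]
    [FiniteDimensional ℝ E] [MeasurableSpace E] [BorelSpace E] (μ : Measure E)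
    [μ.IsAddHaarMeasure] {f : E →ₗ[ℝ] E} (hdet : LinearMap.det f ≠ 0)
    (hdet1 : |LinearMap.det f| < 1) {r : ℝ} (hr : 0 < r)
    (hball : ∀ k, f^[k] '' Metric.ball 0 r ⊆ Metric.closedBall 0 1) :
    ∃ G : ℕ → Set E, (∀ j, MeasurableSet (G j)) ∧ (∀ j, G j ⊆ Metric.closedBall 0 1) ∧
      (∀ j, 0 < μ (G j)) ∧ (∀ j, f '' G j = G (j + 1)) ∧
      (∀ j, μ (G j) = ENNReal.ofReal (|LinearMap.det f| ^ j) * μ (G 0)) ∧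
      Pairwise (Disjoint on G) := by
  have hf : Bijective f := (LinearMap.equivOfDetNeZero f hdet).bijective
  have hμf : ∀ s, μ (f '' s) = ENNReal.ofReal |LinearMap.det f| * μ s :=
    Measure.addHaar_image_linearMap μ f
  have hfin : μ (orbitTail f (Metric.ball 0 r) 0) ≠ ∞ :=
    ((measure_mono (orbitTail_subset hball 0)).trans_lt measure_closedBall_lt_top).ne
  have hG0 := measure_orbitShell_zero_pos hμf (ENNReal.ofReal_lt_one.mpr hdet1)
    (Metric.measure_ball_pos μ 0 hr).ne' hfin
  set G := orbitShell f (Metric.ball 0 r)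
  have hG : ∀ j, μ (G j) = ENNReal.ofReal (|LinearMap.det f| ^ j) * μ (G 0) := fun j => by
    rw [measure_orbitShell hf.injective hμf, ENNReal.ofReal_pow (abs_nonneg _)]
  refine ⟨G,
    measurableSet_orbitShell (f.isOpenMap_of_finiteDimensional hf.surjective) Metric.isOpen_ball,
    fun j => Set.sdiff_subset.trans (orbitTail_subset hball j),
    fun j => hG j ▸ ENNReal.mul_pos (ENNReal.ofReal_pos.mpr (pow_pos (abs_pos.mpr hdet) j)).ne'
      hG0.ne',
    image_orbitShell hf.injective, hG, pairwise_disjoint_orbitShell⟩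

section StepFunctions

variable {X ι : Type*}

theorem comp_sum_indicator_of_pairwiseDisjoint {s : Finset ι} {E : ι → Set X}
    (hE : (s : Set ι).PairwiseDisjoint E) (c : ι → ℝ) {F : ℝ → ℝ} (hF : F 0 = 0) (x : X) :
    F (∑ i ∈ s, (E i).indicator (fun _ => c i) x)
      = ∑ i ∈ s, (E i).indicator (fun _ => F (c i)) x := by
  by_cases hx : ∃ i ∈ s, x ∈ E i
  · obtain ⟨i, hi, hxi⟩ := hx
    have hout : ∀ j ∈ s, j ≠ i → ∀ a : ℝ, (E j).indicator (fun _ => a) x = 0 :=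
      fun j hj hji a => Set.indicator_of_notMem (Set.disjoint_left.mp (hE hj hi hji) · hxi) _
    rw [Finset.sum_eq_single_of_mem i hi fun j hj hji => hout j hj hji _,
      Finset.sum_eq_single_of_mem i hi fun j hj hji => hout j hj hji _,
      Set.indicator_of_mem hxi, Set.indicator_of_mem hxi]
  · push Not at hx
    rw [Finset.sum_eq_zero fun i hi => Set.indicator_of_notMem (hx i hi) _,
      Finset.sum_eq_zero fun i hi => Set.indicator_of_notMem (hx i hi) _, hF]

variable [MeasurableSpace X] {μ : Measure X}

theorem integral_comp_sum_indicator {s : Finset ι} {E : ι → Set X}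
    (hEm : ∀ i ∈ s, MeasurableSet (E i)) (hEfin : ∀ i ∈ s, μ (E i) ≠ ∞)
    (hE : (s : Set ι).PairwiseDisjoint E) (c : ι → ℝ) {F : ℝ → ℝ} (hF : F 0 = 0) :
    ∫ x, F (∑ i ∈ s, (E i).indicator (fun _ => c i) x) ∂μ
      = ∑ i ∈ s, μ.real (E i) * F (c i) := by
  simp_rw [comp_sum_indicator_of_pairwiseDisjoint hE c hF]
  rw [integral_finsetSum _ fun i hi => (integrable_indicator_iff (hEm i hi)).mpr
    (integrableOn_const (hEfin i hi))]
  exact Finset.sum_congr rfl fun i hi => integral_indicator_const _ (hEm i hi)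

variable {f : X → X} {G : ℕ → Set X}

theorem integral_comp_sum_indicator_sub_comp (hf : Injective f) (hfm : Measurable f)
    (hGm : ∀ j, MeasurableSet (G j)) (hGfin : ∀ j, μ (G j) ≠ ∞)
    (hGd : Pairwise (Disjoint on G)) (hGf : ∀ j, f '' G j = G (j + 1)) (hpre : μ (f ⁻¹' G 0) ≠ ∞)
    {N : ℕ} {b : ℕ → ℝ} (hbN : b N = 0) {F : ℝ → ℝ} (hF : F 0 = 0) :
    ∫ x, F (∑ j ∈ Finset.range N, (G j).indicator (fun _ => b j) x
        - ∑ j ∈ Finset.range N, (G j).indicator (fun _ => b j) (f x)) ∂μ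
      = μ.real (f ⁻¹' G 0) * F (-b 0)
        + ∑ j ∈ Finset.range N, μ.real (G j) * F (b j - b (j + 1)) := by
  -- With `E k = f ⁻¹' G k`, so that `E (k + 1) = G k`, `φ - φ ∘ f` is a step function on the
  -- disjoint sets `E 0, …, E N`.
  set E : ℕ → Set X := fun k => f ⁻¹' G k
  have hEsucc : ∀ j, E (j + 1) = G j := fun j => by
    simp only [E, ← hGf j, Set.preimage_image_eq _ hf]
  let v : ℕ → ℝ := fun k => match k with
    | 0 => -b 0
    | j + 1 => b j - b (j + 1)
  have hdiff : ∀ x, ∑ j ∈ Finset.range N, (G j).indicator (fun _ => b j) x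
        - ∑ j ∈ Finset.range N, (G j).indicator (fun _ => b j) (f x)
      = ∑ k ∈ Finset.range (N + 1), (E k).indicator (fun _ => v k) x := by
    intro x
    have hshift : ∑ j ∈ Finset.range N, (G j).indicator (fun _ => b j) (f x)
        = ∑ k ∈ Finset.range (N + 1), (E k).indicator (fun _ => b k) x := by
      rw [Finset.sum_range_succ, hbN, Set.indicator_zero, add_zero]
      exact Finset.sum_congr rfl fun j _ => (Set.indicator_comp_right f).symm
    have hsub : ∀ (s : Set X) (a c : ℝ), s.indicator (fun _ => a - c) x
        = s.indicator (fun _ => a) x - s.indicator (fun _ => c) x := fun s a c => by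
      by_cases hx : x ∈ s <;> simp [hx]
    rw [hshift, Finset.sum_range_succ', Finset.sum_range_succ' _ N]
    simp only [v, hEsucc, hsub, Finset.sum_sub_distrib, ← zero_sub (b 0), Set.indicator_zero]
    ring
  have hEm : ∀ k ∈ Finset.range (N + 1), MeasurableSet (E k) := fun k _ => hfm (hGm k)
  have hEfin : ∀ k ∈ Finset.range (N + 1), μ (E k) ≠ ∞ := fun k _ => by
    cases k with
    | zero => exact hpre
    | succ j => rw [hEsucc]; exact hGfin j
  have hEd : ((Finset.range (N + 1) : Finset ℕ) : Set ℕ).PairwiseDisjoint E :=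
    fun k _ l _ hkl => (hGd hkl).preimage f
  simp_rw [hdiff]
  rw [integral_comp_sum_indicator hEm hEfin hEd v hF, Finset.sum_range_succ']
  simp only [v, hEsucc]
  ring

end StepFunctions

theorem Real.rpow_neg_one_div_rpow {x : ℝ} (hx : 0 ≤ x) {p : ℝ} (hp : p ≠ 0) :
    (x ^ (-(1 / p))) ^ p = x⁻¹ := by
  rw [Real.rpow_neg hx, one_div, ← Real.inv_rpow hx, Real.rpow_inv_rpow (inv_nonneg.2 hx) hp]

/-- On sets of measure `δʲ m`, these coefficients give each of the `n + 1` steps the same share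
`1 / (n + 1)` of the `p`-th power integral. -/
noncomputable def stepCoeff (δ m p : ℝ) (n j : ℕ) : ℝ :=
  if j ≤ n then (((n : ℝ) + 1) * m) ^ (-(1 / p)) * (δ ^ (-(1 / p))) ^ j else 0

section StepCoeff

variable {δ m p : ℝ} {n j : ℕ}

theorem stepCoeff_nonneg (hδ : 0 < δ) (hm : 0 < m) : 0 ≤ stepCoeff δ m p n j := by
  unfold stepCoeff; split_ifs <;> positivity

theorem stepCoeff_rpow_mul (hδ : 0 < δ) (hm : 0 < m) (hp : p ≠ 0) (hj : j ≤ n) :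
    |stepCoeff δ m p n j| ^ p * (δ ^ j * m) = ((n : ℝ) + 1)⁻¹ := by
  have hK := Real.rpow_neg_one_div_rpow (by positivity : (0 : ℝ) ≤ ((n : ℝ) + 1) * m) hp
  have ht : ((δ ^ (-(1 / p))) ^ j) ^ p = (δ ^ j)⁻¹ := by
    rw [← Real.rpow_pow_comm (by positivity), Real.rpow_neg_one_div_rpow hδ.le hp, inv_pow]
  rw [abs_of_nonneg (stepCoeff_nonneg hδ hm), stepCoeff, if_pos hj,
    Real.mul_rpow (by positivity) (by positivity), hK, ht]
  field_simp

theorem stepCoeff_sub_succ (hj : j < n) :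
    stepCoeff δ m p n j - stepCoeff δ m p n (j + 1)
      = stepCoeff δ m p n j * (1 - δ ^ (-(1 / p))) := by
  simp only [stepCoeff, if_pos hj.le, if_pos (Nat.succ_le_of_lt hj)]
  ring

end StepCoeff

section StepFun

variable {X : Type*} {f : X → X} {G : ℕ → Set X} {δ m p : ℝ}

noncomputable def stepFun (G : ℕ → Set X) (δ m p : ℝ) (n : ℕ) (x : X) : ℝ :=
  ∑ j ∈ Finset.range (n + 1), (G j).indicator (fun _ => stepCoeff δ m p n j) x

theorem stepFun_nonneg (hδ : 0 < δ) (hm : 0 < m) (n : ℕ) (x : X) : 0 ≤ stepFun G δ m p n x :=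
  Finset.sum_nonneg fun _ _ => Set.indicator_nonneg (fun _ _ => stepCoeff_nonneg hδ hm) x

theorem support_stepFun_subset (n : ℕ) : support (stepFun G δ m p n) ⊆ ⋃ j, G j :=
  fun _ hx =>
  have ⟨j, _, hj⟩ := Finset.exists_ne_zero_of_sum_ne_zero hx
  Set.mem_iUnion.mpr ⟨j, Set.mem_of_indicator_ne_zero hj⟩

variable [MeasurableSpace X] {μ : Measure X}

theorem memLp_stepFun (hGm : ∀ j, MeasurableSet (G j)) (hGfin : ∀ j, μ (G j) ≠ ∞) (n : ℕ)
    (q : ℝ≥0∞) : MemLp (stepFun G δ m p n) q μ := by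
  have : stepFun G δ m p n
      = ∑ j ∈ Finset.range (n + 1), (G j).indicator fun _ => stepCoeff δ m p n j := by
    ext x; simp [stepFun]
  rw [this]
  exact memLp_finsetSum' _ fun j _ => memLp_indicator_const q (hGm j) _ (Or.inr (hGfin j))

theorem integral_abs_stepFun_rpow (hGm : ∀ j, MeasurableSet (G j))
    (hGd : Pairwise (Disjoint on G)) (hG : ∀ j, μ (G j) = ENNReal.ofReal (δ ^ j * m))
    (hδ : 0 < δ) (hm : 0 < m) (hp : 0 < p) (n : ℕ) :
    ∫ x, |stepFun G δ m p n x| ^ p ∂μ = 1 := by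
  unfold stepFun
  rw [integral_comp_sum_indicator (fun j _ => hGm j) (fun j _ => by simp [hG])
    (fun j _ l _ hjl => hGd hjl) _ (F := fun y => |y| ^ p) (by simp [hp.ne'])]
  have hterm : ∀ j ∈ Finset.range (n + 1), μ.real (G j) * |stepCoeff δ m p n j| ^ p
      = ((n : ℝ) + 1)⁻¹ := fun j hj => by
    rw [measureReal_def, hG, ENNReal.toReal_ofReal (by positivity), mul_comm,
      stepCoeff_rpow_mul hδ hm hp.ne' (Nat.lt_succ_iff.mp (Finset.mem_range.mp hj))]
  rw [Finset.sum_congr rfl hterm, Finset.sum_const, Finset.card_range, nsmul_eq_mul]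
  push_cast
  field_simp

theorem integral_abs_stepFun_sub_comp_rpow (hf : Injective f) (hfm : Measurable f)
    (hGm : ∀ j, MeasurableSet (G j)) (hGd : Pairwise (Disjoint on G))
    (hGf : ∀ j, f '' G j = G (j + 1)) (hG : ∀ j, μ (G j) = ENNReal.ofReal (δ ^ j * m))
    (hpre : μ (f ⁻¹' G 0) = ENNReal.ofReal (δ⁻¹ * m)) (hδ : 0 < δ) (hm : 0 < m) (hp : 0 < p)
    (n : ℕ) :
    ∫ x, |stepFun G δ m p n x - stepFun G δ m p n (f x)| ^ p ∂μ
      = |1 - δ ^ (-(1 / p))| ^ p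
        + (δ⁻¹ + 1 - |1 - δ ^ (-(1 / p))| ^ p) * (1 / ((n : ℝ) + 1)) := by
  set c := stepCoeff δ m p n
  have hreal : ∀ j, μ.real (G j) = δ ^ j * m := fun j => by
    rw [measureReal_def, hG, ENNReal.toReal_ofReal (by positivity)]
  unfold stepFun
  rw [integral_comp_sum_indicator_sub_comp hf hfm hGm (fun j => by simp [hG]) hGd hGf
    (by simp [hpre]) (N := n + 1) (by simp [stepCoeff]) (F := fun y => |y| ^ p)
    (by simp [hp.ne'])]
  have hfirst : μ.real (f ⁻¹' G 0) * |-c 0| ^ p = δ⁻¹ * ((n : ℝ) + 1)⁻¹ := by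
    rw [measureReal_def, hpre, ENNReal.toReal_ofReal (by positivity), abs_neg,
      ← stepCoeff_rpow_mul hδ hm hp.ne' (Nat.zero_le n)]
    ring
  have hmid : ∀ j ∈ Finset.range n, μ.real (G j) * |c j - c (j + 1)| ^ p
      = ((n : ℝ) + 1)⁻¹ * |1 - δ ^ (-(1 / p))| ^ p := fun j hj => by
    have hjn := Finset.mem_range.mp hj
    rw [stepCoeff_sub_succ hjn, abs_mul, Real.mul_rpow (abs_nonneg _) (abs_nonneg _), hreal,
      ← stepCoeff_rpow_mul hδ hm hp.ne' hjn.le]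
    ring
  have hlast : μ.real (G n) * |c n - c (n + 1)| ^ p = ((n : ℝ) + 1)⁻¹ := by
    rw [show c (n + 1) = 0 by simp [c, stepCoeff], sub_zero, hreal, mul_comm,
      stepCoeff_rpow_mul hδ hm hp.ne' le_rfl]
  rw [Finset.sum_range_succ, hfirst, Finset.sum_congr rfl hmid, hlast, Finset.sum_const,
    Finset.card_range, nsmul_eq_mul]
  field_simp
  ring

theorem exists_seq_integral_abs_rpow_eq_one_tendsto (hf : Injective f) (hfm : Measurable f)
    (hGm : ∀ j, MeasurableSet (G j)) (hGd : Pairwise (Disjoint on G))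
    (hGf : ∀ j, f '' G j = G (j + 1)) (hδ : 0 < δ) (hG0 : 0 < μ (G 0)) (hG0fin : μ (G 0) ≠ ∞)
    (hG : ∀ j, μ (G j) = ENNReal.ofReal (δ ^ j) * μ (G 0))
    (hpre : μ (f ⁻¹' G 0) = ENNReal.ofReal δ⁻¹ * μ (G 0)) (hp : 0 < p) :
    ∃ φ : ℕ → X → ℝ, (∀ n x, 0 ≤ φ n x) ∧ (∀ n, support (φ n) ⊆ ⋃ j, G j) ∧
      (∀ n q, MemLp (φ n) q μ) ∧ (∀ n, ∫ x, |φ n x| ^ p ∂μ = 1) ∧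
      Tendsto (fun n => ∫ x, |φ n x - φ n (f x)| ^ p ∂μ) atTop
        (𝓝 (|1 - δ ^ (-(1 / p))| ^ p)) := by
  set m := μ.real (G 0)
  have hm : 0 < m := ENNReal.toReal_pos hG0.ne' hG0fin
  have hG0m : μ (G 0) = ENNReal.ofReal m := (ENNReal.ofReal_toReal hG0fin).symm
  have hG' : ∀ j, μ (G j) = ENNReal.ofReal (δ ^ j * m) := fun j => by
    rw [hG, ENNReal.ofReal_mul (by positivity), hG0m]
  have hpre' : μ (f ⁻¹' G 0) = ENNReal.ofReal (δ⁻¹ * m) := by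
    rw [hpre, ENNReal.ofReal_mul (by positivity), hG0m]
  refine ⟨stepFun G δ m p, stepFun_nonneg hδ hm, support_stepFun_subset,
    memLp_stepFun hGm (fun j => by simp [hG']),
    integral_abs_stepFun_rpow hGm hGd hG' hδ hm hp, ?_⟩
  simp_rw [integral_abs_stepFun_sub_comp_rpow hf hfm hGm hGd hGf hG' hpre' hδ hm hp]
  simpa using tendsto_const_nhds.add (tendsto_one_div_add_atTop_nhds_zero_nat.const_mul
    (δ⁻¹ + 1 - |1 - δ ^ (-(1 / p))| ^ p))

end StepFun

theorem contractive_sets_and_minimizing_sequence (d : ℕ) (hd : 1 ≤ d) (p : ℝ) (hp : 1 ≤ p)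
    (A : Matrix (Fin d) (Fin d) ℝ) (hA : IsUnit A.det)
    (hcon : ∀ μ : ℂ, μ ∈ spectrum ℂ (A.map (algebraMap ℝ ℂ)) → ‖μ‖ < 1) :
    (∃ G : ℕ → Set (EuclideanSpace ℝ (Fin d)),
      (∀ j, MeasurableSet (G j)) ∧
      (∀ j, G j ⊆ Metric.closedBall (0 : EuclideanSpace ℝ (Fin d)) 1) ∧
      (∀ j, 0 < volume (G j)) ∧
      (∀ j, (Matrix.toEuclideanLin A) '' (G j) = G (j + 1)) ∧
      (∀ j : ℕ, volume (G j) = ENNReal.ofReal (|A.det| ^ (j : ℕ)) * volume (G 0)) ∧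
      (∀ j l : ℕ, j ≠ l → G j ∩ G l = ∅)) ∧
    ∃ φ : ℕ → EuclideanSpace ℝ (Fin d) → ℝ,
      (∀ n x, 0 ≤ φ n x) ∧
      (∀ n, Function.support (φ n) ⊆ Metric.closedBall (0 : EuclideanSpace ℝ (Fin d)) 1) ∧
      (∀ n, MemLp (φ n) (ENNReal.ofReal p) volume) ∧
      (∀ n, (∫ x, |φ n x| ^ p) = 1) ∧
      Tendsto (fun n => ∫ x, |φ n x - φ n (Matrix.toEuclideanLin A x)| ^ p) atTop
        (nhds (|1 - |A.det| ^ (-(1 / p))| ^ p)) := by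
  have : Nonempty (Fin d) := ⟨⟨0, hd⟩⟩
  set f := Matrix.toEuclideanLin A
  have hdet : LinearMap.det f = A.det := A.det_toEuclideanLin
  have hdet0 : LinearMap.det f ≠ 0 := hdet ▸ hA.ne_zero
  have hpow : Tendsto (fun k => A ^ k) atTop (𝓝 0) :=
    Matrix.tendsto_pow_of_tendsto_map_ofReal_pow
      (Matrix.tendsto_pow_atTop_nhds_zero_of_forall_norm_lt_one_s15 hcon)
  obtain ⟨r, hr, hball⟩ :=
    (Matrix.toEuclideanCLM (𝕜 := ℝ) A).exists_pos_iterate_image_ball_subset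
      (Matrix.bddAbove_norm_toEuclideanCLM_pow hpow)
  obtain ⟨G, hGm, hGball, hGpos, hGf, hGvol, hGd⟩ :=
    LinearMap.exists_wandering_sets volume hdet0
      (hdet ▸ Matrix.abs_det_lt_one_of_tendsto_pow hpow) hr hball
  rw [hdet] at hGvol
  have hpre : volume (f ⁻¹' G 0) = ENNReal.ofReal |A.det|⁻¹ * volume (G 0) := by
    rw [Measure.addHaar_preimage_linearMap _ hdet0, hdet, abs_inv]
  obtain ⟨φ, hφ0, hφG, hφLp, hφnorm, hφlim⟩ := exists_seq_integral_abs_rpow_eq_one_tendsto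
    (LinearMap.equivOfDetNeZero f hdet0).injective f.continuous_of_finiteDimensional.measurable
    hGm hGd hGf (abs_pos.mpr hA.ne_zero) (hGpos 0)
    ((measure_mono (hGball 0)).trans_lt measure_closedBall_lt_top).ne hGvol hpre
    (one_pos.trans_le hp)
  exact ⟨⟨G, hGm, hGball, hGpos, hGf, hGvol, fun j l hjl => Set.disjoint_iff_inter_eq_empty.mp
    (hGd hjl)⟩, φ, hφ0, fun n => (hφG n).trans (Set.iUnion_subset hGball), fun n => hφLp n _,
    hφnorm, hφlim⟩
end
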